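/- arXiv:math/0701635 — 10 statements merged into one kernel-verified Lean document; each statement's English description precedes it below -/
import Mathlib

section
/- Let H be a complex Hilbert space, A : H → H a bounded self-adjoint operator, and c : H → H a bounded operator with adjoint c* = -c and c ∘ c = -I, which anti-commutes with A (A ∘ c = -c ∘ A). Let l ∈ ℝ, ε > 0, and f : (0,ε) → (0,∞) a continuous function with ∫₀^ε f(x) dx = +∞. If φ : (0,ε) → H is continuously differentiable, satisfies the equation φ'(x) + A(φ(x)) = -l·f(x)·c(φ(x)) for all x ∈ (0,ε), and ∫₀^ε ‖φ(x)‖² f(x) dx < ∞, then φ(x) = 0 for all x ∈ (0,ε). -/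
/-!
Because `c` is skew-adjoint, the term `l f c φ` drops out of `(‖φ‖²)' = 2 Re ⟪φ, φ'⟫`, so
`|(‖φ‖²)'| ≤ 2 ‖A‖ ‖φ‖²`. By a Grönwall argument in both directions of time, a solution that
is nonzero at one point has `‖φ‖²` bounded below by a positive constant on all of `(0, ε)`, and
then `∫ ‖φ‖² f = ∞` since `∫ f = ∞`.
-/

open MeasureTheory Set

open RCLike in
theorem re_inner_apply_self_eq_zero_of_adjoint_eq_neg {𝕜 E : Type*} [RCLike 𝕜]
    [NormedAddCommGroup E] [InnerProductSpace 𝕜 E] [CompleteSpace E] {c : E →L[𝕜] E}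
    (hc : ContinuousLinearMap.adjoint c = -c) (v : E) : re (inner 𝕜 v (c v)) = 0 := by
  have h : inner 𝕜 v (c v) = -(starRingEnd 𝕜) (inner 𝕜 v (c v)) := by
    rw [inner_conj_symm, ← ContinuousLinearMap.adjoint_inner_left, hc,
      neg_apply, inner_neg_left]
  have := congrArg re h
  rw [map_neg, conj_re] at this
  linarith

theorem abs_re_inner_neg_apply_sub_smul_apply_le {H : Type*} [NormedAddCommGroup H]
    [InnerProductSpace ℂ H] [CompleteSpace H] (A : H →L[ℂ] H) {c : H →L[ℂ] H}
    (hc : ContinuousLinearMap.adjoint c = -c) (r : ℝ) (v : H) :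
    |(inner ℂ v (-(A v) - (r : ℂ) • c v)).re| ≤ ‖A‖ * ‖v‖ ^ 2 := by
  have hcv : (inner ℂ v (c v)).re = 0 := re_inner_apply_self_eq_zero_of_adjoint_eq_neg hc v
  rw [inner_sub_right, inner_neg_right, inner_smul_right, Complex.sub_re, Complex.neg_re,
    Complex.re_ofReal_mul, hcv, mul_zero, sub_zero, abs_neg]
  calc |(inner ℂ v (A v)).re| ≤ ‖inner ℂ v (A v)‖ := Complex.abs_re_le_norm _
    _ ≤ ‖v‖ * ‖A v‖ := norm_inner_le_norm _ _
    _ ≤ ‖v‖ * (‖A‖ * ‖v‖) := by gcongr; exact A.le_opNorm v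
    _ = ‖A‖ * ‖v‖ ^ 2 := by ring

theorem monotoneOn_exp_mul_mul_of_neg_mul_le_deriv {s : Set ℝ} (hs : Convex ℝ s)
    {g g' : ℝ → ℝ} {C : ℝ} (hg : ∀ x ∈ s, HasDerivAt g (g' x) x)
    (hg' : ∀ x ∈ s, -(C * g x) ≤ g' x) : MonotoneOn (fun x => Real.exp (C * x) * g x) s := by
  have hderiv : ∀ x ∈ s, HasDerivAt (fun x => Real.exp (C * x) * g x)
      (Real.exp (C * x) * (C * g x + g' x)) x := fun x hx =>
    ((((hasDerivAt_id' x).const_mul C).exp).mul (hg x hx)).congr_deriv (by ring)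
  refine monotoneOn_of_deriv_nonneg hs
    (fun x hx => (hderiv x hx).continuousAt.continuousWithinAt)
    (fun x hx => (hderiv x (interior_subset hx)).differentiableAt.differentiableWithinAt)
    fun x hx => ?_
  rw [(hderiv x (interior_subset hx)).deriv]
  exact mul_nonneg (Real.exp_pos _).le (by linarith [hg' x (interior_subset hx)])

theorem exp_neg_mul_abs_sub_mul_le_of_abs_deriv_le {s : Set ℝ} (hs : Convex ℝ s)
    {g g' : ℝ → ℝ} {C : ℝ} (hg : ∀ x ∈ s, HasDerivAt g (g' x) x)
    (hg' : ∀ x ∈ s, |g' x| ≤ C * g x) {x y : ℝ} (hx : x ∈ s) (hy : y ∈ s) :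
    Real.exp (-(C * |y - x|)) * g x ≤ g y := by
  rcases le_total x y with hxy | hyx
  · have hmono : Real.exp (C * x) * g x ≤ Real.exp (C * y) * g y :=
      monotoneOn_exp_mul_mul_of_neg_mul_le_deriv hs hg
        (fun z hz => neg_le_of_abs_le (hg' z hz)) hx hy hxy
    calc Real.exp (-(C * |y - x|)) * g x
        = Real.exp (-(C * y)) * (Real.exp (C * x) * g x) := by
          rw [abs_of_nonneg (sub_nonneg.2 hxy), ← mul_assoc, ← Real.exp_add]; ring_nf
      _ ≤ Real.exp (-(C * y)) * (Real.exp (C * y) * g y) := by gcongr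
      _ = g y := by rw [← mul_assoc, ← Real.exp_add, neg_add_cancel, Real.exp_zero, one_mul]
  · -- `exp (-C t) * g t` is antitone: the monotone case for `-g` and `-C`
    have hmono : Real.exp (-C * y) * -g y ≤ Real.exp (-C * x) * -g x :=
      monotoneOn_exp_mul_mul_of_neg_mul_le_deriv hs (fun z hz => (hg z hz).neg)
        (fun z hz => by rw [Pi.neg_apply, neg_mul_neg]; linarith [(abs_le.1 (hg' z hz)).2])
        hy hx hyx
    calc Real.exp (-(C * |y - x|)) * g x
        = Real.exp (C * y) * (Real.exp (-C * x) * g x) := by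
          rw [abs_of_nonpos (sub_nonpos.2 hyx), ← mul_assoc, ← Real.exp_add]; ring_nf
      _ ≤ Real.exp (C * y) * (Real.exp (-C * y) * g y) := by
          simp only [mul_neg, neg_le_neg_iff] at hmono; gcongr
      _ = g y := by rw [← mul_assoc, ← Real.exp_add, neg_mul, add_neg_cancel, Real.exp_zero,
          one_mul]

theorem lintegral_ofReal_mul_eq_top_of_le {α : Type*} [MeasurableSpace α] {μ : Measure α}
    {s : Set α} (hs : MeasurableSet s) {f g : α → ℝ} {m : ℝ} (hm : 0 < m)
    (hg : ∀ x ∈ s, m ≤ g x) (hf : ∫⁻ x in s, ENNReal.ofReal (f x) ∂μ = ⊤) :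
    ∫⁻ x in s, ENNReal.ofReal (g x * f x) ∂μ = ⊤ := by
  refine top_unique ?_
  calc ⊤ = ENNReal.ofReal m * ∫⁻ x in s, ENNReal.ofReal (f x) ∂μ := by
        rw [hf, ENNReal.mul_top (ENNReal.ofReal_pos.2 hm).ne']
    _ = ∫⁻ x in s, ENNReal.ofReal m * ENNReal.ofReal (f x) ∂μ :=
        (lintegral_const_mul' _ _ ENNReal.ofReal_ne_top).symm
    _ ≤ ∫⁻ x in s, ENNReal.ofReal (g x * f x) ∂μ := setLIntegral_mono' hs fun x hx => by
        rw [ENNReal.ofReal_mul (hm.le.trans (hg x hx))]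
        gcongr
        exact hg x hx

theorem dirac_no_L2_eigenspinor_abstract_general
    {H : Type*} [NormedAddCommGroup H] [InnerProductSpace ℂ H] [CompleteSpace H]
    (A c : H →L[ℂ] H)
    (hc_skew : ContinuousLinearMap.adjoint c = -c)
    (l : ℝ) (ε : ℝ)
    (f : ℝ → ℝ)
    (hf_div : ∫⁻ x in Set.Ioo 0 ε, ENNReal.ofReal (f x) = ⊤)
    (φ : ℝ → H)
    (hφ_ode : ∀ x ∈ Set.Ioo 0 ε,
      HasDerivAt φ (-(A (φ x)) - ((l * f x : ℝ) : ℂ) • c (φ x)) x)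
    (hφ_L2 : ∫⁻ x in Set.Ioo 0 ε, ENNReal.ofReal (‖φ x‖ ^ 2 * f x) < ⊤) :
    ∀ x ∈ Set.Ioo 0 ε, φ x = 0 := by
  let _ : InnerProductSpace ℝ H := InnerProductSpace.complexToReal
  intro x₀ hx₀
  by_contra hne
  have hderiv : ∀ x ∈ Ioo 0 ε, HasDerivAt (‖φ ·‖ ^ 2)
      (2 * (inner ℂ (φ x) (-(A (φ x)) - ((l * f x : ℝ) : ℂ) • c (φ x))).re) x :=
    fun x hx => (hφ_ode x hx).norm_sq
  have hbound : ∀ x ∈ Ioo 0 ε,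
      |2 * (inner ℂ (φ x) (-(A (φ x)) - ((l * f x : ℝ) : ℂ) • c (φ x))).re|
        ≤ 2 * ‖A‖ * ‖φ x‖ ^ 2 := fun x _ => by
    rw [abs_mul, abs_two, mul_assoc]
    gcongr
    exact abs_re_inner_neg_apply_sub_smul_apply_le A hc_skew _ _
  have hlower : ∀ y ∈ Ioo 0 ε, Real.exp (-(2 * ‖A‖ * ε)) * ‖φ x₀‖ ^ 2 ≤ ‖φ y‖ ^ 2 :=
    fun y hy => by
      refine le_trans ?_ (exp_neg_mul_abs_sub_mul_le_of_abs_deriv_le (convex_Ioo 0 ε)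
        hderiv hbound hx₀ hy)
      gcongr
      rw [abs_le]
      constructor <;> linarith [hx₀.1, hx₀.2, hy.1, hy.2]
  exact hφ_L2.ne (lintegral_ofReal_mul_eq_top_of_le measurableSet_Ioo
    (mul_pos (Real.exp_pos _) (pow_pos (norm_pos_iff.2 hne) 2)) hlower hf_div)

/-- Lemma 2.6 (Lemma `lc`): if `A` is a bounded self-adjoint operator on a complex Hilbert
space `H`, `c` is a bounded skew-adjoint involution (`c* = -c`, `c² = -1`) anti-commuting
with `A`, `l` is real, and `f : (0,ε) → (0,∞)` is continuous with divergent integral, then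
the equation `φ' + Aφ = -l f c φ` has no nonzero solution square-integrable w.r.t. `f dx`. -/
theorem dirac_no_L2_eigenspinor_abstract
    {H : Type*} [NormedAddCommGroup H] [InnerProductSpace ℂ H] [CompleteSpace H]
    (A c : H →L[ℂ] H) (hA : IsSelfAdjoint A)
    (hc_skew : ContinuousLinearMap.adjoint c = -c)
    (hc_sq : c ∘L c = -ContinuousLinearMap.id ℂ H)
    (hAc : A ∘L c = -(c ∘L A))
    (l : ℝ) (ε : ℝ) (hε : 0 < ε)
    (f : ℝ → ℝ) (hf_cont : ContinuousOn f (Set.Ioo 0 ε))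
    (hf_pos : ∀ x ∈ Set.Ioo 0 ε, 0 < f x)
    (hf_div : ∫⁻ x in Set.Ioo 0 ε, ENNReal.ofReal (f x) = ⊤)
    (φ : ℝ → H)
    (hφ_ode : ∀ x ∈ Set.Ioo 0 ε,
      HasDerivAt φ (-(A (φ x)) - ((l * f x : ℝ) : ℂ) • c (φ x)) x)
    (hφ_deriv_cont : ContinuousOn (deriv φ) (Set.Ioo 0 ε))
    (hφ_L2 : ∫⁻ x in Set.Ioo 0 ε, ENNReal.ofReal (‖φ x‖ ^ 2 * f x) < ⊤) :
    ∀ x ∈ Set.Ioo 0 ε, φ x = 0 :=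
  dirac_no_L2_eigenspinor_abstract_general A c hc_skew l ε f hf_div φ hφ_ode hφ_L2
end

section
/- Let H be a complex Hilbert space and c : H → H a bounded operator with adjoint c* = -c. Let l ∈ ℝ, ε > 0, and f : (0,ε) → (0,∞) a continuous function with ∫₀^ε f(x) dx = +∞. If φ : (0,ε) → H is differentiable, satisfies φ'(x) = -l·f(x)·c(φ(x)) for all x ∈ (0,ε), and ∫₀^ε ‖φ(x)‖² f(x) dx < ∞, then φ(x) = 0 for all x ∈ (0,ε). -/
/-!
Skew-adjointness of `c` makes `‖φ‖²` constant on `(0, ε)`: its derivative is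
`2 re ⟪φ, φ'⟫ = -2 l f re ⟪φ, c φ⟫ = 0`. A nonzero constant multiple of the divergent
integral `∫ f` cannot be finite, so that constant is `0`.
-/

open MeasureTheory Set

theorem ContinuousLinearMap.re_inner_self_apply_eq_zero_of_adjoint_eq_neg
    {𝕜 E : Type*} [RCLike 𝕜] [NormedAddCommGroup E] [InnerProductSpace 𝕜 E] [CompleteSpace E]
    {c : E →L[𝕜] E} (hc : c.adjoint = -c) (x : E) : RCLike.re (inner 𝕜 x (c x)) = 0 := by
  have h := c.adjoint_inner_right x x
  rw [hc, neg_apply, inner_neg_right] at h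
  have := congrArg RCLike.re h
  rw [map_neg] at this
  linarith [inner_re_symm (𝕜 := 𝕜) x (c x)]

theorem IsOpen.norm_eq_of_hasDerivAt_of_re_inner_eq_zero
    {H : Type*} [NormedAddCommGroup H] [InnerProductSpace ℂ H]
    {s : Set ℝ} (hs : IsOpen s) (hs' : IsPreconnected s) {φ φ' : ℝ → H}
    (hφ : ∀ x ∈ s, HasDerivAt φ (φ' x) x) (horth : ∀ x ∈ s, RCLike.re (inner ℂ (φ x) (φ' x)) = 0)
    {x y : ℝ} (hx : x ∈ s) (hy : y ∈ s) : ‖φ x‖ = ‖φ y‖ := by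
  -- `HasDerivAt.norm_sq` is stated for real inner product spaces.
  let _ := InnerProductSpace.complexToReal (G := H)
  have hderiv : ∀ z ∈ s, HasDerivAt (‖φ ·‖ ^ 2) 0 z := fun z hz => by
    simpa [real_inner_eq_re_inner, horth z hz] using (hφ z hz).norm_sq
  have hsq := hs.is_const_of_deriv_eq_zero hs'
    (fun z hz => (hderiv z hz).differentiableAt.differentiableWithinAt)
    (fun z hz => (hderiv z hz).deriv) hx hy
  exact (pow_left_inj₀ (norm_nonneg _) (norm_nonneg _) two_ne_zero).mp hsq

theorem MeasureTheory.lintegral_ofReal_const_mul_eq_top {α : Type*} [MeasurableSpace α]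
    {μ : Measure α} {f : α → ℝ} {K : ℝ} (hK : 0 < K)
    (hf : ∫⁻ x, ENNReal.ofReal (f x) ∂μ = ⊤) : ∫⁻ x, ENNReal.ofReal (K * f x) ∂μ = ⊤ := by
  simp_rw [ENNReal.ofReal_mul hK.le]
  rw [lintegral_const_mul' _ _ ENNReal.ofReal_ne_top, hf,
    ENNReal.mul_top (ENNReal.ofReal_pos.mpr hK).ne']

theorem kernel_part_vanishes_general
    {H : Type*} [NormedAddCommGroup H] [InnerProductSpace ℂ H] [CompleteSpace H]
    (c : H →L[ℂ] H) (hc_skew : ContinuousLinearMap.adjoint c = -c)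
    (l : ℝ) (ε : ℝ)
    (f : ℝ → ℝ)
    (hf_div : ∫⁻ x in Set.Ioo 0 ε, ENNReal.ofReal (f x) = ⊤)
    (φ : ℝ → H)
    (hφ_ode : ∀ x ∈ Set.Ioo 0 ε,
      HasDerivAt φ (-(((l * f x : ℝ) : ℂ) • c (φ x))) x)
    (hφ_L2 : ∫⁻ x in Set.Ioo 0 ε, ENNReal.ofReal (‖φ x‖ ^ 2 * f x) < ⊤) :
    ∀ x ∈ Set.Ioo 0 ε, φ x = 0 := by
  intro x hx
  by_contra hne
  have horth : ∀ y ∈ Ioo 0 ε,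
      RCLike.re (inner ℂ (φ y) (-(((l * f y : ℝ) : ℂ) • c (φ y)))) = 0 := fun y _ => by
    rw [inner_neg_right, inner_smul_right, map_neg, RCLike.re_to_complex,
      Complex.re_ofReal_mul, ← RCLike.re_to_complex, c.re_inner_self_apply_eq_zero_of_adjoint_eq_neg hc_skew, mul_zero, neg_zero]
  have hnorm : ∀ y ∈ Ioo 0 ε, ‖φ y‖ = ‖φ x‖ := fun y hy =>
    isOpen_Ioo.norm_eq_of_hasDerivAt_of_re_inner_eq_zero isPreconnected_Ioo hφ_ode horth hy hx
  have hdiv : ∫⁻ y in Ioo 0 ε, ENNReal.ofReal (‖φ x‖ ^ 2 * f y) = ⊤ :=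
    lintegral_ofReal_const_mul_eq_top (by positivity) hf_div
  rw [setLIntegral_congr_fun measurableSet_Ioo (fun y hy => by rw [hnorm y hy]), hdiv] at hφ_L2
  exact lt_irrefl _ hφ_L2

/-- If `c` is a bounded skew-adjoint operator on a complex Hilbert space, `l` is real,
`f : (0,ε) → (0,∞)` is continuous with `∫₀^ε f = ∞`, and `φ` solves `φ' = -l f c φ`
on `(0,ε)` and is square-integrable w.r.t. `f dx`, then `φ ≡ 0` on `(0,ε)`. -/
theorem kernel_part_vanishes
    {H : Type*} [NormedAddCommGroup H] [InnerProductSpace ℂ H] [CompleteSpace H]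
    (c : H →L[ℂ] H) (hc_skew : ContinuousLinearMap.adjoint c = -c)
    (l : ℝ) (ε : ℝ) (hε : 0 < ε)
    (f : ℝ → ℝ) (hf_cont : ContinuousOn f (Set.Ioo 0 ε))
    (hf_pos : ∀ x ∈ Set.Ioo 0 ε, 0 < f x)
    (hf_div : ∫⁻ x in Set.Ioo 0 ε, ENNReal.ofReal (f x) = ⊤)
    (φ : ℝ → H)
    (hφ_ode : ∀ x ∈ Set.Ioo 0 ε,
      HasDerivAt φ (-(((l * f x : ℝ) : ℂ) • c (φ x))) x)
    (hφ_L2 : ∫⁻ x in Set.Ioo 0 ε, ENNReal.ofReal (‖φ x‖ ^ 2 * f x) < ⊤) :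
    ∀ x ∈ Set.Ioo 0 ε, φ x = 0 :=
  kernel_part_vanishes_general c hc_skew l ε f hf_div φ hφ_ode hφ_L2
end

section
/- Let λ > 0, l ∈ ℝ, ε > 0, and f : (0,ε) → (0,∞) a continuous function with ∫₀^ε f(x) dx = +∞. Suppose a, b : (0,ε) → ℂ are differentiable and satisfy the system a'(x) = -λ·a(x) + l·f(x)·b(x) and b'(x) = -l·f(x)·a(x) + λ·b(x) for all x ∈ (0,ε), together with ∫₀^ε (|a(x)|² + |b(x)|²) f(x) dx < ∞. Then a(x) = 0 and b(x) = 0 for all x ∈ (0,ε). -/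
/-!
The energy `E = ‖a‖² + ‖b‖²` satisfies `E' = 2λ(‖b‖² - ‖a‖²)`, in which the coupling terms
`± l f` cancel, so `|E'| ≤ 2|λ| E`. Hence `E` cannot decay faster than exponentially: if
`E(x₀) > 0`, then `E ≥ E(x₀) e^{-2|λ|ε} > 0` on all of `(0, ε)`, and `∫ E f` dominates a positive
multiple of the divergent `∫ f`.
-/

open MeasureTheory Set Filter Real

theorem hasDerivAt_normSq_add_normSq {a b : ℝ → ℂ} {lam g x : ℝ}
    (ha : HasDerivAt a (-(lam : ℂ) * a x + (g : ℂ) * b x) x)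
    (hb : HasDerivAt b (-(g : ℂ) * a x + (lam : ℂ) * b x) x) :
    HasDerivAt (fun y => ‖a y‖ ^ 2 + ‖b y‖ ^ 2) (2 * lam * (‖b x‖ ^ 2 - ‖a x‖ ^ 2)) x := by
  refine (ha.norm_sq.add hb.norm_sq).congr_deriv ?_
  simp only [Complex.inner, Complex.sq_norm, Complex.normSq_apply, Complex.mul_re, Complex.add_re,
    Complex.add_im, Complex.mul_im, Complex.neg_re, Complex.neg_im, Complex.ofReal_re,
    Complex.ofReal_im, Complex.conj_re, Complex.conj_im]
  ring

theorem HasDerivAt.mul_exp_const_mul {E : ℝ → ℝ} {e c x : ℝ} (hE : HasDerivAt E e x) :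
    HasDerivAt (fun y => E y * Real.exp (c * y)) ((e + c * E x) * Real.exp (c * x)) x := by
  have hexp : HasDerivAt (fun y => Real.exp (c * y)) (Real.exp (c * x) * c) x :=
    ((hasDerivAt_id x).const_mul c).exp.congr_deriv (by simp)
  exact (hE.mul hexp).congr_deriv (by ring)

section
variable {E E' : ℝ → ℝ} {s : Set ℝ} {c : ℝ}

theorem monotoneOn_mul_exp_of_le_deriv_add (hs : Convex ℝ s)
    (hE : ∀ x ∈ s, HasDerivAt E (E' x) x) (hE' : ∀ x ∈ s, 0 ≤ E' x + c * E x) :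
    MonotoneOn (fun x => E x * exp (c * x)) s :=
  monotoneOn_of_hasDerivWithinAt_nonneg hs
    (fun x hx => (HasDerivAt.mul_exp_const_mul (hE x hx)).continuousAt.continuousWithinAt)
    (fun x hx => (HasDerivAt.mul_exp_const_mul (hE x (interior_subset hx))).hasDerivWithinAt)
    (fun x hx => mul_nonneg (hE' x (interior_subset hx)) (exp_pos _).le)

theorem antitoneOn_mul_exp_of_deriv_add_le (hs : Convex ℝ s)
    (hE : ∀ x ∈ s, HasDerivAt E (E' x) x) (hE' : ∀ x ∈ s, E' x + c * E x ≤ 0) :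
    AntitoneOn (fun x => E x * exp (c * x)) s :=
  antitoneOn_of_hasDerivWithinAt_nonpos hs
    (fun x hx => (HasDerivAt.mul_exp_const_mul (hE x hx)).continuousAt.continuousWithinAt)
    (fun x hx => (HasDerivAt.mul_exp_const_mul (hE x (interior_subset hx))).hasDerivWithinAt)
    (fun x hx => mul_nonpos_of_nonpos_of_nonneg (hE' x (interior_subset hx)) (exp_pos _).le)

theorem mul_exp_neg_mul_abs_sub_le_of_abs_deriv_le {K : ℝ} (hs : Convex ℝ s)
    (hE : ∀ x ∈ s, HasDerivAt E (E' x) x) (hE' : ∀ x ∈ s, |E' x| ≤ K * E x)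
    {x y : ℝ} (hx : x ∈ s) (hy : y ∈ s) :
    E y * exp (-K * |x - y|) ≤ E x := by
  rcases le_total y x with hyx | hxy
  · have hmono := monotoneOn_mul_exp_of_le_deriv_add (c := K) hs hE
      fun t ht => by linarith [neg_abs_le (E' t), hE' t ht]
    calc E y * exp (-K * |x - y|) = E y * exp (K * y) * exp (-K * x) := by
          rw [abs_of_nonneg (sub_nonneg.2 hyx), mul_assoc, ← exp_add]; ring_nf
      _ ≤ E x * exp (K * x) * exp (-K * x) :=
          mul_le_mul_of_nonneg_right (hmono hy hx hyx) (exp_pos _).le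
      _ = E x := by rw [mul_assoc, ← exp_add]; simp
  · have hanti := antitoneOn_mul_exp_of_deriv_add_le (c := -K) hs hE
      fun t ht => by linarith [le_abs_self (E' t), hE' t ht]
    calc E y * exp (-K * |x - y|) = E y * exp (-K * y) * exp (K * x) := by
          rw [abs_of_nonpos (sub_nonpos.2 hxy), mul_assoc, ← exp_add]; ring_nf
      _ ≤ E x * exp (-K * x) * exp (K * x) :=
          mul_le_mul_of_nonneg_right (hanti hx hy hxy) (exp_pos _).le
      _ = E x := by rw [mul_assoc, ← exp_add]; simp
end

theorem setLIntegral_ofReal_mul_eq_top {α : Type*} [MeasurableSpace α] {μ : Measure α}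
    {s : Set α} (hs : MeasurableSet s) {g f : α → ℝ} {c : ℝ} (hc : 0 < c)
    (hg : ∀ x ∈ s, c ≤ g x) (hf : ∫⁻ x in s, ENNReal.ofReal (f x) ∂μ = ⊤) :
    ∫⁻ x in s, ENNReal.ofReal (g x * f x) ∂μ = ⊤ := by
  refine top_le_iff.1 ?_
  calc ⊤ = ∫⁻ x in s, ENNReal.ofReal c * ENNReal.ofReal (f x) ∂μ := by
        rw [lintegral_const_mul' _ _ ENNReal.ofReal_ne_top, hf, ENNReal.mul_top]
        exact ENNReal.ofReal_pos.2 hc |>.ne'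
    _ ≤ ∫⁻ x in s, ENNReal.ofReal (g x * f x) ∂μ := by
        refine setLIntegral_mono' hs fun x hx => ?_
        rw [ENNReal.ofReal_mul (hc.trans_le (hg x hx)).le]
        gcongr
        exact hg x hx

theorem ode_system_no_L2_solution_general
    (lam l ε : ℝ)
    (f : ℝ → ℝ)
    (hf_div : ∫⁻ x in Set.Ioo 0 ε, ENNReal.ofReal (f x) = ⊤)
    (a b : ℝ → ℂ)
    (ha : ∀ x ∈ Set.Ioo 0 ε,
      HasDerivAt a (-(lam : ℂ) * a x + ((l * f x : ℝ) : ℂ) * b x) x)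
    (hb : ∀ x ∈ Set.Ioo 0 ε,
      HasDerivAt b (-((l * f x : ℝ) : ℂ) * a x + (lam : ℂ) * b x) x)
    (hL2 : ∫⁻ x in Set.Ioo 0 ε,
      ENNReal.ofReal ((‖a x‖ ^ 2 + ‖b x‖ ^ 2) * f x) < ⊤) :
    ∀ x ∈ Set.Ioo 0 ε, a x = 0 ∧ b x = 0 := by
  intro x₀ hx₀
  set E : ℝ → ℝ := fun y => ‖a y‖ ^ 2 + ‖b y‖ ^ 2
  have hE : ∀ x ∈ Ioo 0 ε, HasDerivAt E (2 * lam * (‖b x‖ ^ 2 - ‖a x‖ ^ 2)) x :=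
    fun x hx => hasDerivAt_normSq_add_normSq (ha x hx) (hb x hx)
  have hE' : ∀ x ∈ Ioo 0 ε, |2 * lam * (‖b x‖ ^ 2 - ‖a x‖ ^ 2)| ≤ 2 * |lam| * E x := by
    intro x _
    rw [abs_mul, abs_mul, abs_two]
    gcongr
    exact abs_sub_le_iff.2 ⟨by linarith [sq_nonneg ‖a x‖], by linarith [sq_nonneg ‖b x‖]⟩
  have hlow : ∀ x ∈ Ioo 0 ε, E x₀ * exp (-(2 * |lam|) * ε) ≤ E x := by
    intro x hx
    refine le_trans ?_ (mul_exp_neg_mul_abs_sub_le_of_abs_deriv_le (convex_Ioo 0 ε) hE hE' hx hx₀)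
    have hdist : |x - x₀| ≤ ε :=
      abs_sub_le_iff.2 ⟨by linarith [hx.2, hx₀.1], by linarith [hx.1, hx₀.2]⟩
    have hexp : -(2 * |lam|) * ε ≤ -(2 * |lam|) * |x - x₀| := by nlinarith [abs_nonneg lam]
    exact mul_le_mul_of_nonneg_left (exp_le_exp.2 hexp) (by positivity)
  have hE₀ : E x₀ ≤ 0 := by
    by_contra! hpos
    exact hL2.ne (setLIntegral_ofReal_mul_eq_top measurableSet_Ioo
      (mul_pos hpos (exp_pos _)) hlow hf_div)
  have ha₀ : ‖a x₀‖ ^ 2 = 0 := by nlinarith [sq_nonneg ‖a x₀‖, sq_nonneg ‖b x₀‖]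
  have hb₀ : ‖b x₀‖ ^ 2 = 0 := by nlinarith [sq_nonneg ‖a x₀‖, sq_nonneg ‖b x₀‖]
  simpa using And.intro ha₀ hb₀

/-- The system `a' = -λa + l f b`, `b' = -l f a + λ b` (with `λ > 0`, `l` real,
`f : (0,ε) → (0,∞)` continuous with divergent integral) has no nonzero solution
square-integrable with respect to `f dx`. -/
theorem ode_system_no_L2_solution
    (lam l ε : ℝ) (hlam : 0 < lam) (hε : 0 < ε)
    (f : ℝ → ℝ) (hf_cont : ContinuousOn f (Set.Ioo 0 ε))
    (hf_pos : ∀ x ∈ Set.Ioo 0 ε, 0 < f x)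
    (hf_div : ∫⁻ x in Set.Ioo 0 ε, ENNReal.ofReal (f x) = ⊤)
    (a b : ℝ → ℂ)
    (ha : ∀ x ∈ Set.Ioo 0 ε,
      HasDerivAt a (-(lam : ℂ) * a x + ((l * f x : ℝ) : ℂ) * b x) x)
    (hb : ∀ x ∈ Set.Ioo 0 ε,
      HasDerivAt b (-((l * f x : ℝ) : ℂ) * a x + (lam : ℂ) * b x) x)
    (hL2 : ∫⁻ x in Set.Ioo 0 ε,
      ENNReal.ofReal ((‖a x‖ ^ 2 + ‖b x‖ ^ 2) * f x) < ⊤) :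
    ∀ x ∈ Set.Ioo 0 ε, a x = 0 ∧ b x = 0 :=
  ode_system_no_L2_solution_general lam l ε f hf_div a b ha hb hL2
end

section
/- Let λ > 0, l ∈ ℝ, 0 < ε < ∞, and f : (0,ε) → (0,∞) a continuous function with ∫₀^ε f(x) dx = +∞. Suppose a, b : (0,ε) → ℝ are differentiable and satisfy a'(x) = l·e^{2λx}·f(x)·b(x) and b'(x) = -l·e^{-2λx}·f(x)·a(x) for all x ∈ (0,ε), together with ∫₀^ε (a(x)² + b(x)²) f(x) dx < ∞. Then a(x) = 0 and b(x) = 0 for all x ∈ (0,ε). -/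
open MeasureTheory Set Filter

/-!
Along a solution, `M = a² + e^{4λx} b²` is nondecreasing and `N = e^{-4λx} a² + b²` is
nonincreasing (the cross terms cancel in both derivatives). On the bounded interval both are
comparable to `a² + b²`, so a solution that is nonzero at one point `x` satisfies
`a² + b² ≥ δ := min (e^{-4λε} M x) (N x) > 0` on all of `(0, ε)`, whence
`∫ (a² + b²) f ≥ δ ∫ f = ∞`.
-/

noncomputable def energyUp (lam : ℝ) (a b : ℝ → ℝ) (t : ℝ) : ℝ :=
  a t ^ 2 + Real.exp (4 * lam * t) * b t ^ 2

noncomputable def energyDown (lam : ℝ) (a b : ℝ → ℝ) (t : ℝ) : ℝ :=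
  Real.exp (-(4 * lam * t)) * a t ^ 2 + b t ^ 2

section System

variable {lam l : ℝ} {f a b : ℝ → ℝ}

theorem hasDerivAt_energyUp {t : ℝ}
    (ha : HasDerivAt a (l * Real.exp (2 * lam * t) * f t * b t) t)
    (hb : HasDerivAt b (-(l * Real.exp (-(2 * lam * t)) * f t * a t)) t) :
    HasDerivAt (energyUp lam a b) (4 * lam * Real.exp (4 * lam * t) * b t ^ 2) t := by
  have hexp : HasDerivAt (fun s : ℝ => Real.exp (4 * lam * s))
      (Real.exp (4 * lam * t) * (4 * lam)) t := by
    simpa using ((hasDerivAt_id t).const_mul (4 * lam)).exp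
  refine ((ha.pow 2).add (hexp.mul (hb.pow 2))).congr_deriv ?_
  have he : Real.exp (4 * lam * t) * Real.exp (-(2 * lam * t)) = Real.exp (2 * lam * t) := by
    rw [← Real.exp_add]; ring_nf
  simp only [Nat.cast_ofNat, Pi.pow_apply]
  linear_combination (-(2 * l * f t * a t * b t)) * he

theorem hasDerivAt_energyDown {t : ℝ}
    (ha : HasDerivAt a (l * Real.exp (2 * lam * t) * f t * b t) t)
    (hb : HasDerivAt b (-(l * Real.exp (-(2 * lam * t)) * f t * a t)) t) :
    HasDerivAt (energyDown lam a b) (-(4 * lam * Real.exp (-(4 * lam * t)) * a t ^ 2)) t := by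
  have hexp : HasDerivAt (fun s : ℝ => Real.exp (-(4 * lam * s)))
      (Real.exp (-(4 * lam * t)) * (-(4 * lam))) t := by
    simpa using ((hasDerivAt_id t).const_mul (-(4 * lam))).exp
  refine ((hexp.mul (ha.pow 2)).add (hb.pow 2)).congr_deriv ?_
  have he : Real.exp (-(4 * lam * t)) * Real.exp (2 * lam * t) = Real.exp (-(2 * lam * t)) := by
    rw [← Real.exp_add]; ring_nf
  simp only [Nat.cast_ofNat, Pi.pow_apply]
  linear_combination (2 * l * f t * a t * b t) * he

variable {s : Set ℝ}

theorem monotoneOn_energyUp (hlam : 0 ≤ lam) (hs : Convex ℝ s)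
    (ha : ∀ t ∈ s, HasDerivAt a (l * Real.exp (2 * lam * t) * f t * b t) t)
    (hb : ∀ t ∈ s, HasDerivAt b (-(l * Real.exp (-(2 * lam * t)) * f t * a t)) t) :
    MonotoneOn (energyUp lam a b) s := by
  have hM : ∀ t ∈ s, HasDerivAt (energyUp lam a b) _ t :=
    fun t ht => hasDerivAt_energyUp (ha t ht) (hb t ht)
  refine monotoneOn_of_deriv_nonneg hs
    (fun t ht => (hM t ht).continuousAt.continuousWithinAt)
    (fun t ht => (hM t (interior_subset ht)).differentiableAt.differentiableWithinAt)
    (fun t ht => ?_)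
  rw [(hM t (interior_subset ht)).deriv]
  positivity

theorem antitoneOn_energyDown (hlam : 0 ≤ lam) (hs : Convex ℝ s)
    (ha : ∀ t ∈ s, HasDerivAt a (l * Real.exp (2 * lam * t) * f t * b t) t)
    (hb : ∀ t ∈ s, HasDerivAt b (-(l * Real.exp (-(2 * lam * t)) * f t * a t)) t) :
    AntitoneOn (energyDown lam a b) s := by
  have hN : ∀ t ∈ s, HasDerivAt (energyDown lam a b) _ t :=
    fun t ht => hasDerivAt_energyDown (ha t ht) (hb t ht)
  refine antitoneOn_of_deriv_nonpos hs
    (fun t ht => (hN t ht).continuousAt.continuousWithinAt)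
    (fun t ht => (hN t (interior_subset ht)).differentiableAt.differentiableWithinAt)
    (fun t ht => ?_)
  rw [(hN t (interior_subset ht)).deriv, neg_nonpos]
  positivity

end System

section Comparison

variable {lam : ℝ} {a b : ℝ → ℝ} {t : ℝ}

theorem energyDown_le_sq_add_sq (hlam : 0 ≤ lam) (ht : 0 ≤ t) :
    energyDown lam a b t ≤ a t ^ 2 + b t ^ 2 := by
  have : Real.exp (-(4 * lam * t)) ≤ 1 := Real.exp_le_one_iff.2 (by nlinarith)
  unfold energyDown
  nlinarith [sq_nonneg (a t)]

theorem exp_mul_energyUp_le_sq_add_sq {ε : ℝ} (hlam : 0 ≤ lam) (ht₀ : 0 ≤ t) (ht : t ≤ ε) :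
    Real.exp (-(4 * lam * ε)) * energyUp lam a b t ≤ a t ^ 2 + b t ^ 2 := by
  have h1 : Real.exp (-(4 * lam * ε)) * Real.exp (4 * lam * t) ≤ 1 := by
    rw [← Real.exp_add, Real.exp_le_one_iff]; nlinarith
  have h2 : Real.exp (-(4 * lam * ε)) ≤ 1 :=
    Real.exp_le_one_iff.2 (by nlinarith)
  unfold energyUp
  nlinarith [sq_nonneg (a t), sq_nonneg (b t)]

theorem energyUp_pos (h : ¬(a t = 0 ∧ b t = 0)) : 0 < energyUp lam a b t := by
  unfold energyUp
  by_cases hat : a t = 0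
  · have : b t ≠ 0 := fun hbt => h ⟨hat, hbt⟩
    positivity
  · positivity

theorem energyDown_pos (h : ¬(a t = 0 ∧ b t = 0)) : 0 < energyDown lam a b t := by
  unfold energyDown
  by_cases hat : a t = 0
  · have : b t ≠ 0 := fun hbt => h ⟨hat, hbt⟩
    positivity
  · positivity

end Comparison

theorem exists_pos_le_sq_add_sq_of_ne_zero {lam l ε : ℝ} {f a b : ℝ → ℝ} {s : Set ℝ}
    (hlam : 0 ≤ lam) (hs : Convex ℝ s) (hsε : s ⊆ Icc 0 ε)
    (ha : ∀ t ∈ s, HasDerivAt a (l * Real.exp (2 * lam * t) * f t * b t) t)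
    (hb : ∀ t ∈ s, HasDerivAt b (-(l * Real.exp (-(2 * lam * t)) * f t * a t)) t)
    {x : ℝ} (hx : x ∈ s) (hne : ¬(a x = 0 ∧ b x = 0)) :
    ∃ δ > 0, ∀ t ∈ s, δ ≤ a t ^ 2 + b t ^ 2 := by
  refine ⟨min (Real.exp (-(4 * lam * ε)) * energyUp lam a b x) (energyDown lam a b x),
    lt_min (mul_pos (Real.exp_pos _) (energyUp_pos hne)) (energyDown_pos hne), fun t ht => ?_⟩
  rcases le_total t x with htx | hxt
  · calc _ ≤ energyDown lam a b x := min_le_right _ _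
      _ ≤ energyDown lam a b t := antitoneOn_energyDown hlam hs ha hb ht hx htx
      _ ≤ a t ^ 2 + b t ^ 2 := energyDown_le_sq_add_sq hlam (hsε ht).1
  · calc _ ≤ Real.exp (-(4 * lam * ε)) * energyUp lam a b x := min_le_left _ _
      _ ≤ Real.exp (-(4 * lam * ε)) * energyUp lam a b t := by
        gcongr; exact monotoneOn_energyUp hlam hs ha hb hx ht hxt
      _ ≤ a t ^ 2 + b t ^ 2 := exp_mul_energyUp_le_sq_add_sq hlam (hsε ht).1 (hsε ht).2

theorem lintegral_ofReal_eq_top_of_const_mul_le {μ : Measure ℝ} {s : Set ℝ} {f g : ℝ → ℝ}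
    {δ : ℝ} (hs : MeasurableSet s) (hf : ∫⁻ x in s, ENNReal.ofReal (f x) ∂μ = ⊤) (hδ : 0 < δ)
    (hle : ∀ x ∈ s, δ * f x ≤ g x) :
    ∫⁻ x in s, ENNReal.ofReal (g x) ∂μ = ⊤ := by
  refine top_le_iff.1 ?_
  calc (⊤ : ENNReal) = ENNReal.ofReal δ * ∫⁻ x in s, ENNReal.ofReal (f x) ∂μ := by
        rw [hf, ENNReal.mul_top (by simpa using hδ)]
    _ = ∫⁻ x in s, ENNReal.ofReal (δ * f x) ∂μ := by
        rw [← lintegral_const_mul' _ _ ENNReal.ofReal_ne_top]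
        simp only [ENNReal.ofReal_mul hδ.le]
    _ ≤ ∫⁻ x in s, ENNReal.ofReal (g x) ∂μ :=
        setLIntegral_mono_ae' hs (ae_of_all _ fun x hx => ENNReal.ofReal_le_ofReal (hle x hx))

theorem transformed_system_no_L2_solution_general
    (lam l ε : ℝ) (hlam : 0 < lam)
    (f : ℝ → ℝ)
    (hf_pos : ∀ x ∈ Set.Ioo 0 ε, 0 < f x)
    (hf_div : ∫⁻ x in Set.Ioo 0 ε, ENNReal.ofReal (f x) = ⊤)
    (a b : ℝ → ℝ)
    (ha : ∀ x ∈ Set.Ioo 0 ε,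
      HasDerivAt a (l * Real.exp (2 * lam * x) * f x * b x) x)
    (hb : ∀ x ∈ Set.Ioo 0 ε,
      HasDerivAt b (-(l * Real.exp (-(2 * lam * x)) * f x * a x)) x)
    (hL2 : ∫⁻ x in Set.Ioo 0 ε,
      ENNReal.ofReal ((a x ^ 2 + b x ^ 2) * f x) < ⊤) :
    ∀ x ∈ Set.Ioo 0 ε, a x = 0 ∧ b x = 0 := by
  intro x hx
  by_contra hne
  obtain ⟨δ, hδ, hle⟩ := exists_pos_le_sq_add_sq_of_ne_zero hlam.le (convex_Ioo 0 ε)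
    Ioo_subset_Icc_self ha hb hx hne
  refine hL2.ne (lintegral_ofReal_eq_top_of_const_mul_le measurableSet_Ioo hf_div hδ ?_)
  exact fun t ht => mul_le_mul_of_nonneg_right (hle t ht) (hf_pos t ht).le

/-- The real system `a' = l e^{2λx} f b`, `b' = -l e^{-2λx} f a` (with `λ > 0`, `l` real,
`0 < ε < ∞`, `f : (0,ε) → (0,∞)` continuous with divergent integral) has no nonzero
solution square-integrable with respect to `f dx`. -/
theorem transformed_system_no_L2_solution
    (lam l ε : ℝ) (hlam : 0 < lam) (hε : 0 < ε)
    (f : ℝ → ℝ) (hf_cont : ContinuousOn f (Set.Ioo 0 ε))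
    (hf_pos : ∀ x ∈ Set.Ioo 0 ε, 0 < f x)
    (hf_div : ∫⁻ x in Set.Ioo 0 ε, ENNReal.ofReal (f x) = ⊤)
    (a b : ℝ → ℝ)
    (ha : ∀ x ∈ Set.Ioo 0 ε,
      HasDerivAt a (l * Real.exp (2 * lam * x) * f x * b x) x)
    (hb : ∀ x ∈ Set.Ioo 0 ε,
      HasDerivAt b (-(l * Real.exp (-(2 * lam * x)) * f x * a x)) x)
    (hL2 : ∫⁻ x in Set.Ioo 0 ε,
      ENNReal.ofReal ((a x ^ 2 + b x ^ 2) * f x) < ⊤) :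
    ∀ x ∈ Set.Ioo 0 ε, a x = 0 ∧ b x = 0 :=
  transformed_system_no_L2_solution_general lam l ε hlam f hf_pos hf_div a b ha hb hL2
end

section
/- Let λ > 0, l ∈ ℝ, 0 < ε < ∞, and f : (0,ε) → (0,∞) a continuous function. Suppose a, b : (0,ε) → ℝ are differentiable, satisfy a'(x) = l·e^{2λx}·f(x)·b(x) and b'(x) = -l·e^{-2λx}·f(x)·a(x) for all x ∈ (0,ε), and ∫₀^ε (a(x)² + b(x)²) f(x) dx < ∞. Then the limits lim_{x→0⁺} a(x) and lim_{x→0⁺} b(x) exist and are finite; in other words, a and b extend continuously to [0,ε). -/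
open MeasureTheory Set Filter

/-- If `g` has integrable derivative on `(0,ε)`, then `g` has a limit as `x → 0⁺`. -/
private lemma tendsto_of_integrable_deriv {ε : ℝ} (hε : 0 < ε) {g g' : ℝ → ℝ}
    (hg : ∀ x ∈ Ioo 0 ε, HasDerivAt g (g' x) x)
    (hint : IntegrableOn g' (Ioo 0 ε)) :
    ∃ L, Tendsto g (nhdsWithin 0 (Ioi 0)) (nhds L) := by
  set c := ε / 2 with hcdef
  have hc0 : 0 < c := by positivity
  have hcε : c < ε := by rw [hcdef]; linarith
  have hIcc : IntegrableOn g' (Icc 0 c) := by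
    rw [integrableOn_Icc_iff_integrableOn_Ioc]
    exact hint.mono_set (fun x hx => ⟨hx.1, hx.2.trans_lt hcε⟩)
  have hcont : ContinuousOn (fun x => ∫ t in Ioc 0 x, g' t) (Icc 0 c) :=
    intervalIntegral.continuousOn_primitive hIcc
  refine ⟨g c - ∫ t in Ioc 0 c, g' t, ?_⟩
  have key : ∀ x ∈ Ioo 0 c, g x = (g c - ∫ t in Ioc 0 c, g' t) + ∫ t in Ioc 0 x, g' t := by
    intro x hx
    have hsub : uIcc x c ⊆ Ioo 0 ε := by
      rw [uIcc_of_le hx.2.le]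
      exact fun y hy => ⟨hx.1.trans_le hy.1, hy.2.trans_lt hcε⟩
    have hii : IntervalIntegrable g' volume x c := by
      rw [intervalIntegrable_iff, uIoc_of_le hx.2.le]
      exact hint.mono_set (fun y hy => ⟨hx.1.trans hy.1, hy.2.trans_lt hcε⟩)
    have hftc : ∫ t in x..c, g' t = g c - g x :=
      intervalIntegral.integral_eq_sub_of_hasDerivAt
        (fun y hy => hg y (hsub hy)) hii
    have hsplit : (∫ t in Ioc 0 x, g' t) + ∫ t in Ioc x c, g' t = ∫ t in Ioc 0 c, g' t := by
      rw [← intervalIntegral.integral_of_le hx.1.le, ← intervalIntegral.integral_of_le hx.2.le,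
        ← intervalIntegral.integral_of_le hc0.le]
      apply intervalIntegral.integral_add_adjacent_intervals
      · rw [intervalIntegrable_iff, uIoc_of_le hx.1.le]
        exact hint.mono_set (fun y hy => ⟨hy.1, hy.2.trans_lt (hx.2.trans hcε)⟩)
      · rw [intervalIntegrable_iff, uIoc_of_le hx.2.le]
        exact hint.mono_set (fun y hy => ⟨hx.1.trans hy.1, hy.2.trans_lt hcε⟩)
    have h2 : ∫ t in Ioc x c, g' t = g c - g x := by
      rw [← hftc, intervalIntegral.integral_of_le hx.2.le]
    rw [h2] at hsplit
    linarith [hsplit]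
  have hten : Tendsto (fun x => ∫ t in Ioc 0 x, g' t) (nhdsWithin 0 (Ioi 0)) (nhds 0) := by
    have h0 : (∫ t in Ioc (0:ℝ) 0, g' t) = 0 := by simp
    have := (hcont 0 ⟨le_refl 0, hc0.le⟩)
    rw [ContinuousWithinAt, h0] at this
    refine this.mono_left ?_
    rw [← nhdsWithin_Ioo_eq_nhdsGT hc0]
    exact nhdsWithin_mono 0 (fun y hy => ⟨hy.1.le, hy.2.le⟩)
  have : Tendsto (fun x => (g c - ∫ t in Ioc 0 c, g' t) + ∫ t in Ioc 0 x, g' t)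
      (nhdsWithin 0 (Ioi 0)) (nhds ((g c - ∫ t in Ioc 0 c, g' t) + 0)) :=
    tendsto_const_nhds.add hten
  rw [add_zero] at this
  refine this.congr' ?_
  filter_upwards [Ioo_mem_nhdsGT_of_mem ⟨le_refl 0, hc0⟩] with x hx
  exact (key x hx).symm

/-- If `g` is continuous on `(0,ε)` and `g²` has a limit as `x → 0⁺`, then so does `g`. -/
private lemma tendsto_of_sq {ε : ℝ} (hε : 0 < ε) {g : ℝ → ℝ}
    (hg : ContinuousOn g (Ioo 0 ε)) {A : ℝ}
    (hA : Tendsto (fun x => g x ^ 2) (nhdsWithin 0 (Ioi 0)) (nhds A)) :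
    ∃ L, Tendsto g (nhdsWithin 0 (Ioi 0)) (nhds L) := by
  have hA0 : 0 ≤ A := by
    refine le_of_tendsto_of_tendsto tendsto_const_nhds hA ?_
    filter_upwards with x using sq_nonneg (g x)
  rcases eq_or_lt_of_le hA0 with hA0' | hA0'
  · -- A = 0 : g → 0 by squeeze
    refine ⟨0, ?_⟩
    have habs : Tendsto (fun x => |g x|) (nhdsWithin 0 (Ioi 0)) (nhds 0) := by
      have : Tendsto (fun x => Real.sqrt (g x ^ 2)) (nhdsWithin 0 (Ioi 0)) (nhds (Real.sqrt A)) :=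
        (Real.continuous_sqrt.tendsto A).comp hA
      rw [← hA0', Real.sqrt_zero] at this
      refine this.congr (fun x => ?_)
      rw [Real.sqrt_sq_eq_abs]
    exact squeeze_zero_norm (fun x => le_refl _) habs
  · -- A > 0 : g nonvanishing near 0, constant sign
    have hev : ∀ᶠ x in nhdsWithin 0 (Ioi 0), A / 2 < g x ^ 2 :=
      hA (lt_mem_nhds (by linarith))
    rw [eventually_nhdsWithin_iff] at hev
    rcases Metric.eventually_nhds_iff.mp hev with ⟨δ₀, hδ₀, hball⟩
    set δ := min (min δ₀ ε) (ε / 2) with hδdef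
    have hδ0 : 0 < δ := by positivity
    have hδε : δ ≤ ε := le_trans (min_le_left _ _) (min_le_right _ _)
    have hδδ₀ : δ ≤ δ₀ := le_trans (min_le_left _ _) (min_le_left _ _)
    have hne : ∀ x ∈ Ioo (0:ℝ) δ, g x ≠ 0 := by
      intro x hx
      have : A / 2 < g x ^ 2 := by
        apply hball (y := x) _ hx.1
        rw [Real.dist_eq, sub_zero, abs_of_pos hx.1]
        exact hx.2.trans_le hδδ₀
      intro h; rw [h] at this; simp at this; linarith
    set m := δ / 2 with hmdef
    have hm : m ∈ Ioo (0:ℝ) δ := ⟨by positivity, by rw [hmdef]; linarith⟩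
    have hsign : ∀ x ∈ Ioo (0:ℝ) δ, 0 < g x * g m := by
      intro x hx
      by_contra hcon
      push_neg at hcon
      have hx0 : g x ≠ 0 := hne x hx
      have hm0 : g m ≠ 0 := hne m hm
      have hlt : g x * g m < 0 := lt_of_le_of_ne hcon (mul_ne_zero hx0 hm0)
      have hsub : uIcc x m ⊆ Ioo 0 δ := Set.ordConnected_Ioo.uIcc_subset hx hm
      have hivt : uIcc (g x) (g m) ⊆ g '' uIcc x m :=
        intermediate_value_uIcc (hg.mono (hsub.trans
          (fun y hy => ⟨hy.1, hy.2.trans_le hδε⟩)))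
      have h0mem : (0:ℝ) ∈ uIcc (g x) (g m) := by
        rw [Set.mem_uIcc]
        rcases mul_neg_iff.mp hlt with ⟨h1, h2⟩ | ⟨h1, h2⟩
        · exact Or.inr ⟨h2.le, h1.le⟩
        · exact Or.inl ⟨h1.le, h2.le⟩
      rcases hivt h0mem with ⟨y, hy, hy0⟩
      exact hne y (hsub hy) hy0
    set s : ℝ := if 0 < g m then 1 else -1 with hsdef
    refine ⟨s * Real.sqrt A, ?_⟩
    have hten : Tendsto (fun x => s * Real.sqrt (g x ^ 2)) (nhdsWithin 0 (Ioi 0))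
        (nhds (s * Real.sqrt A)) :=
      tendsto_const_nhds.mul ((Real.continuous_sqrt.tendsto A).comp hA)
    refine hten.congr' ?_
    filter_upwards [Ioo_mem_nhdsGT_of_mem ⟨le_refl 0, hδ0⟩] with x hx
    have habs : Real.sqrt (g x ^ 2) = |g x| := Real.sqrt_sq_eq_abs _
    have hs := hsign x hx
    by_cases hgm : 0 < g m
    · have hgx : 0 < g x := by
        rcases mul_pos_iff.mp hs with ⟨h1, h2⟩ | ⟨h1, h2⟩
        · exact h1
        · exact absurd hgm (not_lt.mpr h2.le)
      rw [hsdef, if_pos hgm, one_mul, habs, abs_of_pos hgx]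
    · have hgm' : g m < 0 := lt_of_le_of_ne (not_lt.mp hgm) (hne m hm)
      have hgx : g x < 0 := by
        rcases mul_pos_iff.mp hs with ⟨h1, h2⟩ | ⟨h1, h2⟩
        · exact absurd h2 (not_lt.mpr hgm'.le)
        · exact h1
      rw [hsdef, if_neg hgm, habs, abs_of_neg hgx]
      ring

/-- Solutions of the system `a' = l e^{2λx} f b`, `b' = -l e^{-2λx} f a` on `(0,ε)`
(with `λ > 0`, `l` real, `0 < ε < ∞`, `f : (0,ε) → (0,∞)` continuous) which are
square-integrable with respect to `f dx` extend continuously to `x = 0`: the limits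
of `a` and `b` as `x → 0⁺` exist and are finite. -/
theorem transformed_system_continuous_extension
    (lam l ε : ℝ) (hlam : 0 < lam) (hε : 0 < ε)
    (f : ℝ → ℝ) (hf_cont : ContinuousOn f (Set.Ioo 0 ε))
    (hf_pos : ∀ x ∈ Set.Ioo 0 ε, 0 < f x)
    (a b : ℝ → ℝ)
    (ha : ∀ x ∈ Set.Ioo 0 ε,
      HasDerivAt a (l * Real.exp (2 * lam * x) * f x * b x) x)
    (hb : ∀ x ∈ Set.Ioo 0 ε,
      HasDerivAt b (-(l * Real.exp (-(2 * lam * x)) * f x * a x)) x)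
    (hL2 : ∫⁻ x in Set.Ioo 0 ε,
      ENNReal.ofReal ((a x ^ 2 + b x ^ 2) * f x) < ⊤) :
    (∃ La : ℝ, Filter.Tendsto a (nhdsWithin 0 (Set.Ioi 0)) (nhds La)) ∧
    (∃ Lb : ℝ, Filter.Tendsto b (nhdsWithin 0 (Set.Ioi 0)) (nhds Lb)) := by
  have hacont : ContinuousOn a (Ioo 0 ε) := fun x hx =>
    (ha x hx).continuousAt.continuousWithinAt
  have hbcont : ContinuousOn b (Ioo 0 ε) := fun x hx =>
    (hb x hx).continuousAt.continuousWithinAt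
  -- the weight function is integrable
  have hGcont : ContinuousOn (fun x => (a x ^ 2 + b x ^ 2) * f x) (Ioo 0 ε) :=
    ((hacont.pow 2).add (hbcont.pow 2)).mul hf_cont
  have hGnn : ∀ x ∈ Ioo (0:ℝ) ε, 0 ≤ (a x ^ 2 + b x ^ 2) * f x := fun x hx =>
    mul_nonneg (by positivity) (hf_pos x hx).le
  have hG : IntegrableOn (fun x => (a x ^ 2 + b x ^ 2) * f x) (Ioo 0 ε) := by
    refine ⟨hGcont.aestronglyMeasurable measurableSet_Ioo, ?_⟩
    rw [hasFiniteIntegral_iff_ofReal (ae_restrict_of_forall_mem measurableSet_Ioo hGnn)]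
    exact hL2
  -- common bound facts
  have hexp : ∀ x ∈ Ioo (0:ℝ) ε, ∀ t : ℝ, t ≤ 2 * lam * ε →
      Real.exp t ≤ Real.exp (2 * lam * ε) := fun x _ t ht => Real.exp_le_exp.mpr ht
  -- derivative of a²
  set C : ℝ := |l| * Real.exp (2 * lam * ε) with hCdef
  have key : ∀ (g dg : ℝ → ℝ), ContinuousOn dg (Ioo 0 ε) →
      (∀ x ∈ Ioo 0 ε, HasDerivAt (fun y => g y ^ 2) (dg x) x) →
      (∀ x ∈ Ioo (0:ℝ) ε, ‖dg x‖ ≤ C * ((a x ^ 2 + b x ^ 2) * f x)) →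
      ContinuousOn g (Ioo 0 ε) →
      ∃ L, Tendsto g (nhdsWithin 0 (Ioi 0)) (nhds L) := by
    intro g dg hdgcont hderiv hbound hgcont
    have hint : IntegrableOn dg (Ioo 0 ε) := by
      refine (hG.const_mul C).mono'
        (hdgcont.aestronglyMeasurable measurableSet_Ioo) ?_
      exact ae_restrict_of_forall_mem measurableSet_Ioo hbound
    obtain ⟨A, hA⟩ := tendsto_of_integrable_deriv hε hderiv hint
    exact tendsto_of_sq hε hgcont hA
  constructor
  · refine key a (fun x => (2:ℝ) * a x ^ 1 * (l * Real.exp (2 * lam * x) * f x * b x))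
      ?_ (fun x hx => (ha x hx).pow 2) ?_ hacont
    · exact ((continuousOn_const.mul (hacont.pow 1)).mul
        (((continuousOn_const.mul ((Real.continuous_exp.comp
          (continuous_const.mul continuous_id)).continuousOn)).mul hf_cont).mul hbcont))
    · intro x hx
      have hfx : 0 ≤ f x := (hf_pos x hx).le
      have hE : Real.exp (2 * lam * x) ≤ Real.exp (2 * lam * ε) :=
        Real.exp_le_exp.mpr (by nlinarith [hx.2])
      have hEpos : (0:ℝ) < Real.exp (2 * lam * x) := Real.exp_pos _
      have habs : ‖(2:ℝ) * a x ^ 1 * (l * Real.exp (2 * lam * x) * f x * b x)‖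
          = 2 * |l| * Real.exp (2 * lam * x) * f x * (|a x| * |b x|) := by
        simp only [Real.norm_eq_abs, abs_mul, pow_one, abs_of_pos hEpos,
          abs_of_nonneg hfx, abs_two]
        ring
      rw [habs]
      have hab : |a x| * |b x| ≤ (a x ^ 2 + b x ^ 2) / 2 := by
        nlinarith [sq_abs (a x), sq_abs (b x), sq_nonneg (|a x| - |b x|)]
      calc 2 * |l| * Real.exp (2 * lam * x) * f x * (|a x| * |b x|)
          ≤ 2 * |l| * Real.exp (2 * lam * ε) * f x * ((a x ^ 2 + b x ^ 2) / 2) := by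
            gcongr
        _ = C * ((a x ^ 2 + b x ^ 2) * f x) := by rw [hCdef]; ring
  · refine key b (fun x => (2:ℝ) * b x ^ 1 * (-(l * Real.exp (-(2 * lam * x)) * f x * a x)))
      ?_ (fun x hx => (hb x hx).pow 2) ?_ hbcont
    · exact ((continuousOn_const.mul (hbcont.pow 1)).mul
        (((continuousOn_const.mul ((Real.continuous_exp.comp
          (continuous_const.mul continuous_id).neg).continuousOn)).mul hf_cont).mul
          hacont).neg)
    · intro x hx
      have hfx : 0 ≤ f x := (hf_pos x hx).le
      have hE : Real.exp (-(2 * lam * x)) ≤ Real.exp (2 * lam * ε) :=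
        Real.exp_le_exp.mpr (by nlinarith [hx.1, hx.2])
      have hEpos : (0:ℝ) < Real.exp (-(2 * lam * x)) := Real.exp_pos _
      have habs : ‖(2:ℝ) * b x ^ 1 * (-(l * Real.exp (-(2 * lam * x)) * f x * a x))‖
          = 2 * |l| * Real.exp (-(2 * lam * x)) * f x * (|a x| * |b x|) := by
        simp only [Real.norm_eq_abs, abs_mul, abs_neg, pow_one, abs_of_pos hEpos,
          abs_of_nonneg hfx, abs_two]
        ring
      rw [habs]
      have hab : |a x| * |b x| ≤ (a x ^ 2 + b x ^ 2) / 2 := by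
        nlinarith [sq_abs (a x), sq_abs (b x), sq_nonneg (|a x| - |b x|)]
      calc 2 * |l| * Real.exp (-(2 * lam * x)) * f x * (|a x| * |b x|)
          ≤ 2 * |l| * Real.exp (2 * lam * ε) * f x * ((a x ^ 2 + b x ^ 2) / 2) := by
            gcongr
        _ = C * ((a x ^ 2 + b x ^ 2) * f x) := by rw [hCdef]; ring
end

section
/- Let λ > 0, l ∈ ℝ, 0 < ε < ∞, and f : (0,ε) → (0,∞) a continuous function with ∫₀^ε f(x) dx = +∞. Suppose a, b : (0,ε) → ℝ are differentiable, satisfy a'(x) = l·e^{2λx}·f(x)·b(x) and b'(x) = -l·e^{-2λx}·f(x)·a(x) for all x ∈ (0,ε), and ∫₀^ε (a(x)² + b(x)²) f(x) dx < ∞. Then a(x) → 0 and b(x) → 0 as x → 0⁺. -/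
open MeasureTheory Set Filter Topology Real

/-!
The weighted energy `a² + e^{4λx} b²` is the Lyapunov function of the system: the weight is
chosen so that the two cross terms `± 2 l e^{2λx} f a b` of its derivative cancel, leaving
`4λ e^{4λx} b² ≥ 0`, so it is nondecreasing and has a limit at `0⁺`. That limit is `0`, since
otherwise `a² + b²` would be bounded below by a positive constant near `0` and `∫ (a² + b²) f`
would diverge together with `∫ f`. Both `a²` and `b²` are dominated by the energy.
-/

noncomputable def energy (lam : ℝ) (a b : ℝ → ℝ) (x : ℝ) : ℝ :=
  a x ^ 2 + exp (4 * lam * x) * b x ^ 2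

lemma hasDerivAt_energy {lam l k x : ℝ} {a b : ℝ → ℝ}
    (ha : HasDerivAt a (l * exp (2 * lam * x) * k * b x) x)
    (hb : HasDerivAt b (-(l * exp (-(2 * lam * x)) * k * a x)) x) :
    HasDerivAt (energy lam a b) (4 * lam * exp (4 * lam * x) * b x ^ 2) x := by
  have hexp : HasDerivAt (fun y => exp (4 * lam * y)) (exp (4 * lam * x) * (4 * lam * 1)) x :=
    ((hasDerivAt_id x).const_mul (4 * lam)).exp
  refine ((ha.pow 2).add (hexp.mul (hb.pow 2))).congr_deriv ?_
  have hweight : exp (4 * lam * x) * exp (-(2 * lam * x)) = exp (2 * lam * x) := by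
    rw [← exp_add]; ring_nf
  simp only [Pi.pow_apply]
  push_cast
  linear_combination (-2 * l * k * a x * b x) * hweight

lemma monotoneOn_energy {lam l : ℝ} (hlam : 0 ≤ lam) {s : Set ℝ}
    (hs : Convex ℝ s) {f a b : ℝ → ℝ}
    (ha : ∀ x ∈ s, HasDerivAt a (l * exp (2 * lam * x) * f x * b x) x)
    (hb : ∀ x ∈ s, HasDerivAt b (-(l * exp (-(2 * lam * x)) * f x * a x)) x) :
    MonotoneOn (energy lam a b) s := by
  have hderiv x (hx : x ∈ s) := hasDerivAt_energy (ha x hx) (hb x hx)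
  exact monotoneOn_of_hasDerivWithinAt_nonneg hs
    (fun x hx => (hderiv x hx).continuousAt.continuousWithinAt)
    (fun x hx => (hderiv x (interior_subset hx)).hasDerivWithinAt)
    (fun x _ => by positivity)

lemma sq_le_energy_left (lam : ℝ) (a b : ℝ → ℝ) (x : ℝ) : a x ^ 2 ≤ energy lam a b x :=
  le_add_of_nonneg_right (by positivity)

lemma sq_le_energy_right {lam x : ℝ} (h : 0 ≤ lam * x) (a b : ℝ → ℝ) :
    b x ^ 2 ≤ energy lam a b x := by
  have : 1 ≤ exp (4 * lam * x) := one_le_exp (by linarith)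
  unfold energy
  nlinarith [sq_nonneg (a x), sq_nonneg (b x)]

lemma energy_le_exp_mul {lam x : ℝ} (h : 0 ≤ lam * x) (a b : ℝ → ℝ) :
    energy lam a b x ≤ exp (4 * lam * x) * (a x ^ 2 + b x ^ 2) := by
  have : 1 ≤ exp (4 * lam * x) := one_le_exp (by linarith)
  unfold energy
  nlinarith [sq_nonneg (a x)]

lemma exists_lt_of_lintegral_ofReal_mul_lt_top {α : Type*} [MeasurableSpace α] {μ : Measure α}
    {s : Set α} (hs : MeasurableSet s) {f g : α → ℝ}
    (hf : ∫⁻ x in s, ENNReal.ofReal (f x) ∂μ = ⊤)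
    (hgf : ∫⁻ x in s, ENNReal.ofReal (g x * f x) ∂μ < ⊤) {c : ℝ} (hc : 0 < c) :
    ∃ x ∈ s, g x < c := by
  by_contra! hge
  have hpointwise : ∀ x ∈ s,
      ENNReal.ofReal c * ENNReal.ofReal (f x) ≤ ENNReal.ofReal (g x * f x) := fun x hx => by
    rw [ENNReal.ofReal_mul (hc.le.trans (hge x hx))]
    gcongr
    exact hge x hx
  refine hgf.ne (top_le_iff.mp ?_)
  calc ⊤ = ENNReal.ofReal c * ∫⁻ x in s, ENNReal.ofReal (f x) ∂μ := by
        rw [hf, ENNReal.mul_top (by simpa using hc)]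
    _ = ∫⁻ x in s, ENNReal.ofReal c * ENNReal.ofReal (f x) ∂μ :=
        (lintegral_const_mul' _ _ ENNReal.ofReal_ne_top).symm
    _ ≤ ∫⁻ x in s, ENNReal.ofReal (g x * f x) ∂μ :=
        setLIntegral_mono_ae' hs (ae_of_all _ hpointwise)

lemma MonotoneOn.tendsto_zero_of_nonneg_of_forall_exists_lt {φ : ℝ → ℝ} {x y : ℝ}
    (hmono : MonotoneOn φ (Ioo x y)) (hnonneg : ∀ z ∈ Ioo x y, 0 ≤ φ z)
    (hsmall : ∀ c > 0, ∃ z ∈ Ioo x y, φ z < c) :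
    Tendsto φ (𝓝[>] x) (𝓝 0) := by
  rw [Metric.tendsto_nhds]
  intro c hc
  obtain ⟨z, hz, hφz⟩ := hsmall c hc
  filter_upwards [Ioo_mem_nhdsGT hz.1] with w hw
  have hwmem : w ∈ Ioo x y := ⟨hw.1, hw.2.trans hz.2⟩
  rw [Real.dist_0_eq_abs, abs_of_nonneg (hnonneg w hwmem)]
  exact (hmono hwmem hz hw.2.le).trans_lt hφz

lemma tendsto_zero_of_sq_le {α : Type*} {l : Filter α} {u φ : α → ℝ}
    (hφ : Tendsto φ l (𝓝 0)) (h : ∀ᶠ x in l, u x ^ 2 ≤ φ x) : Tendsto u l (𝓝 0) := by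
  have hsqrt : Tendsto (fun x => √(φ x)) l (𝓝 0) := by simpa using hφ.sqrt
  refine squeeze_zero_norm' (h.mono fun x hx => ?_) hsqrt
  rw [Real.norm_eq_abs, ← Real.sqrt_sq_eq_abs]
  exact Real.sqrt_le_sqrt hx

theorem transformed_system_limit_zero_general
    (lam l ε : ℝ) (hlam : 0 < lam)
    (f : ℝ → ℝ)
    (hf_div : ∫⁻ x in Set.Ioo 0 ε, ENNReal.ofReal (f x) = ⊤)
    (a b : ℝ → ℝ)
    (ha : ∀ x ∈ Set.Ioo 0 ε,
      HasDerivAt a (l * Real.exp (2 * lam * x) * f x * b x) x)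
    (hb : ∀ x ∈ Set.Ioo 0 ε,
      HasDerivAt b (-(l * Real.exp (-(2 * lam * x)) * f x * a x)) x)
    (hL2 : ∫⁻ x in Set.Ioo 0 ε,
      ENNReal.ofReal ((a x ^ 2 + b x ^ 2) * f x) < ⊤) :
    Filter.Tendsto a (nhdsWithin 0 (Set.Ioi 0)) (nhds 0) ∧
    Filter.Tendsto b (nhdsWithin 0 (Set.Ioi 0)) (nhds 0) := by
  have hweight : 0 < exp (4 * lam * ε) := exp_pos _
  have hsmall : ∀ c > 0, ∃ x ∈ Ioo 0 ε, energy lam a b x < c := by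
    intro c hc
    obtain ⟨x, hx, hxc⟩ := exists_lt_of_lintegral_ofReal_mul_lt_top measurableSet_Ioo hf_div hL2
      (div_pos hc hweight)
    have hlamx : 0 ≤ lam * x := mul_nonneg hlam.le hx.1.le
    refine ⟨x, hx, (energy_le_exp_mul hlamx a b).trans_lt ?_⟩
    calc exp (4 * lam * x) * (a x ^ 2 + b x ^ 2)
        ≤ exp (4 * lam * ε) * (a x ^ 2 + b x ^ 2) := by
          gcongr
          exact hx.2.le
      _ < c := by rwa [← lt_div_iff₀' hweight]
  have hlim : Tendsto (energy lam a b) (𝓝[>] 0) (𝓝 0) :=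
    (monotoneOn_energy hlam.le (convex_Ioo 0 ε) ha hb).tendsto_zero_of_nonneg_of_forall_exists_lt
      (fun x _ => by unfold energy; positivity) hsmall
  refine ⟨tendsto_zero_of_sq_le hlim (Eventually.of_forall (sq_le_energy_left lam a b)),
    tendsto_zero_of_sq_le hlim ?_⟩
  filter_upwards [self_mem_nhdsWithin] with x (hx : 0 < x)
  exact sq_le_energy_right (mul_nonneg hlam.le hx.le) a b

/-- Solutions of the system `a' = l e^{2λx} f b`, `b' = -l e^{-2λx} f a` on `(0,ε)`
(with `λ > 0`, `l` real, `0 < ε < ∞`, `f : (0,ε) → (0,∞)` continuous with divergent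
integral) which are square-integrable with respect to `f dx` tend to `0` at `x = 0⁺`. -/
theorem transformed_system_limit_zero
    (lam l ε : ℝ) (hlam : 0 < lam) (hε : 0 < ε)
    (f : ℝ → ℝ) (hf_cont : ContinuousOn f (Set.Ioo 0 ε))
    (hf_pos : ∀ x ∈ Set.Ioo 0 ε, 0 < f x)
    (hf_div : ∫⁻ x in Set.Ioo 0 ε, ENNReal.ofReal (f x) = ⊤)
    (a b : ℝ → ℝ)
    (ha : ∀ x ∈ Set.Ioo 0 ε,
      HasDerivAt a (l * Real.exp (2 * lam * x) * f x * b x) x)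
    (hb : ∀ x ∈ Set.Ioo 0 ε,
      HasDerivAt b (-(l * Real.exp (-(2 * lam * x)) * f x * a x)) x)
    (hL2 : ∫⁻ x in Set.Ioo 0 ε,
      ENNReal.ofReal ((a x ^ 2 + b x ^ 2) * f x) < ⊤) :
    Filter.Tendsto a (nhdsWithin 0 (Set.Ioi 0)) (nhds 0) ∧
    Filter.Tendsto b (nhdsWithin 0 (Set.Ioi 0)) (nhds 0) :=
  transformed_system_limit_zero_general lam l ε hlam f hf_div a b ha hb hL2
end

section
/- Let λ > 0, l ∈ ℝ, 0 < ε < ∞, and f : (0,ε) → (0,∞) a continuous function. Suppose a, b : (0,ε) → ℝ are differentiable, satisfy a'(x) = l·e^{2λx}·f(x)·b(x) and b'(x) = -l·e^{-2λx}·f(x)·a(x) for all x ∈ (0,ε), and a(x) → 0 and b(x) → 0 as x → 0⁺. Then a(x) = 0 and b(x) = 0 for all x ∈ (0,ε). (The proof observes that F(x) := e^{-4λx}·a(x)² + b(x)² satisfies F ≥ 0, F(0⁺) = 0 and F'(x) = -4λ·e^{-4λx}·a(x)² ≤ 0, hence F ≡ 0.) -/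
open MeasureTheory Set Filter

/-!
The weighted energy `F x = exp (-4λx) * a x ^ 2 + b x ^ 2` is a Lyapunov function for the system:
the weights are chosen so that the cross terms `± 2 l f a b exp (-2λx)` of `F'` cancel, leaving
`F' = -4λ exp (-4λx) a ² ≤ 0`. Hence `F` is antitone on `(0, ε)` and bounded above by its limit `0`
at `0⁺`; being a sum of squares with positive weights, it vanishes together with `a` and `b`.
-/

section

variable {α β : Type*} [LinearOrder α] [DenselyOrdered α] [TopologicalSpace α] [OrderTopology α]
  [TopologicalSpace β] [Preorder β] [ClosedIciTopology β]

theorem AntitoneOn.le_of_tendsto_nhdsGT {F : α → β} {c d : α} {L : β}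
    (hF : AntitoneOn F (Ioo c d)) (hL : Tendsto F (nhdsWithin c (Ioi c)) (nhds L))
    {x : α} (hx : x ∈ Ioo c d) : F x ≤ L := by
  have : (nhdsWithin c (Ioi c)).NeBot := nhdsGT_neBot_of_exists_gt ⟨x, hx.1⟩
  refine ge_of_tendsto hL ?_
  filter_upwards [Ioo_mem_nhdsGT hx.1] with y hy
  exact hF ⟨hy.1, hy.2.trans hx.2⟩ hx hy.2.le

end

theorem antitoneOn_Ioo_of_hasDerivAt_nonpos {F F' : ℝ → ℝ} {c d : ℝ}
    (hF : ∀ x ∈ Ioo c d, HasDerivAt F (F' x) x) (hF' : ∀ x ∈ Ioo c d, F' x ≤ 0) :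
    AntitoneOn F (Ioo c d) :=
  antitoneOn_of_hasDerivWithinAt_nonpos (convex_Ioo c d)
    (fun x hx => (hF x hx).continuousAt.continuousWithinAt)
    (by simpa only [interior_Ioo] using fun x hx => (hF x hx).hasDerivWithinAt)
    (by simpa only [interior_Ioo] using hF')

theorem eq_zero_and_eq_zero_of_mul_sq_add_sq_nonpos {w u v : ℝ} (hw : 0 < w)
    (h : w * u ^ 2 + v ^ 2 ≤ 0) : u = 0 ∧ v = 0 := by
  have hu : u ^ 2 = 0 := by nlinarith [sq_nonneg u, sq_nonneg v]
  have hv : v ^ 2 = 0 := by nlinarith [sq_nonneg u, sq_nonneg v]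
  exact ⟨pow_eq_zero_iff two_ne_zero |>.mp hu, pow_eq_zero_iff two_ne_zero |>.mp hv⟩

noncomputable def weightedEnergy (lam : ℝ) (a b : ℝ → ℝ) (x : ℝ) : ℝ :=
  Real.exp (-(4 * lam * x)) * a x ^ 2 + b x ^ 2

theorem hasDerivAt_weightedEnergy {lam l g x : ℝ} {a b : ℝ → ℝ}
    (ha : HasDerivAt a (l * Real.exp (2 * lam * x) * g * b x) x)
    (hb : HasDerivAt b (-(l * Real.exp (-(2 * lam * x)) * g * a x)) x) :
    HasDerivAt (weightedEnergy lam a b) (-(4 * lam) * Real.exp (-(4 * lam * x)) * a x ^ 2) x := by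
  have hexp : HasDerivAt (fun x : ℝ => Real.exp (-(4 * lam * x)))
      (Real.exp (-(4 * lam * x)) * -(4 * lam)) x := by
    simpa using (((hasDerivAt_id x).const_mul (4 * lam)).neg).exp
  have hcancel : Real.exp (-(4 * lam * x)) * Real.exp (2 * lam * x) = Real.exp (-(2 * lam * x)) := by
    rw [← Real.exp_add]; ring_nf
  refine ((hexp.mul (ha.pow 2)).add (hb.pow 2)).congr_deriv ?_
  simp only [Pi.pow_apply, Nat.cast_ofNat, Nat.add_one_sub_one, pow_one]
  linear_combination 2 * a x * l * g * b x * hcancel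

theorem tendsto_weightedEnergy_zero {lam : ℝ} {a b : ℝ → ℝ} {l : Filter ℝ}
    (hl : l ≤ nhds 0) (ha : Tendsto a l (nhds 0)) (hb : Tendsto b l (nhds 0)) :
    Tendsto (weightedEnergy lam a b) l (nhds 0) := by
  have hexp : Tendsto (fun x : ℝ => Real.exp (-(4 * lam * x))) l (nhds 1) := by
    have : Continuous (fun x : ℝ => Real.exp (-(4 * lam * x))) := by fun_prop
    simpa using (this.tendsto 0).mono_left hl
  have h := (hexp.mul (ha.pow 2)).add (hb.pow 2)
  norm_num at h
  exact h

theorem transformed_system_vanishes_of_limit_zero_general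
    (lam l ε : ℝ) (hlam : 0 < lam)
    (f : ℝ → ℝ)
    (a b : ℝ → ℝ)
    (ha : ∀ x ∈ Set.Ioo 0 ε,
      HasDerivAt a (l * Real.exp (2 * lam * x) * f x * b x) x)
    (hb : ∀ x ∈ Set.Ioo 0 ε,
      HasDerivAt b (-(l * Real.exp (-(2 * lam * x)) * f x * a x)) x)
    (ha0 : Filter.Tendsto a (nhdsWithin 0 (Set.Ioi 0)) (nhds 0))
    (hb0 : Filter.Tendsto b (nhdsWithin 0 (Set.Ioi 0)) (nhds 0)) :
    ∀ x ∈ Set.Ioo 0 ε, a x = 0 ∧ b x = 0 := by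
  have hanti : AntitoneOn (weightedEnergy lam a b) (Ioo 0 ε) :=
    antitoneOn_Ioo_of_hasDerivAt_nonpos (fun x hx => hasDerivAt_weightedEnergy (ha x hx) (hb x hx))
      fun x _ => mul_nonpos_of_nonpos_of_nonneg
        (mul_nonpos_of_nonpos_of_nonneg (by linarith) (Real.exp_pos _).le) (sq_nonneg _)
  intro x hx
  exact eq_zero_and_eq_zero_of_mul_sq_add_sq_nonpos (Real.exp_pos _) <|
    hanti.le_of_tendsto_nhdsGT (tendsto_weightedEnergy_zero nhdsWithin_le_nhds ha0 hb0) hx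

/-- If `λ > 0`, `l` real, `0 < ε < ∞`, `f : (0,ε) → (0,∞)` continuous, and `a, b` solve
`a' = l e^{2λx} f b`, `b' = -l e^{-2λx} f a` on `(0,ε)` with `a(x) → 0` and `b(x) → 0`
as `x → 0⁺`, then `a ≡ 0` and `b ≡ 0` on `(0,ε)`.
(Proof: `F(x) := e^{-4λx} a² + b²` satisfies `F ≥ 0`, `F(0⁺) = 0`, `F' ≤ 0`.) -/
theorem transformed_system_vanishes_of_limit_zero
    (lam l ε : ℝ) (hlam : 0 < lam) (hε : 0 < ε)
    (f : ℝ → ℝ) (hf_cont : ContinuousOn f (Set.Ioo 0 ε))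
    (hf_pos : ∀ x ∈ Set.Ioo 0 ε, 0 < f x)
    (a b : ℝ → ℝ)
    (ha : ∀ x ∈ Set.Ioo 0 ε,
      HasDerivAt a (l * Real.exp (2 * lam * x) * f x * b x) x)
    (hb : ∀ x ∈ Set.Ioo 0 ε,
      HasDerivAt b (-(l * Real.exp (-(2 * lam * x)) * f x * a x)) x)
    (ha0 : Filter.Tendsto a (nhdsWithin 0 (Set.Ioi 0)) (nhds 0))
    (hb0 : Filter.Tendsto b (nhdsWithin 0 (Set.Ioi 0)) (nhds 0)) :
    ∀ x ∈ Set.Ioo 0 ε, a x = 0 ∧ b x = 0 :=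
  transformed_system_vanishes_of_limit_zero_general lam l ε hlam f a b ha hb ha0 hb0
end

section
/- Let λ, l ∈ ℝ, ε > 0, and f : (0,ε) → (0,∞) a continuous function with ∫₀^ε f(x) dx = +∞. Suppose (a₁, b₁) and (a₂, b₂) are two differentiable solutions on (0,ε) of the system u'(x) = -λ·u(x) + l·f(x)·v(x), v'(x) = -l·f(x)·u(x) + λ·v(x), whose Wronskian a₁·b₂ - a₂·b₁ is nonzero at some (equivalently, every) point of (0,ε). Then the two solutions cannot both be square-integrable with respect to f(x)dx: it is not the case that both ∫₀^ε (a₁² + b₁²) f dx < ∞ and ∫₀^ε (a₂² + b₂²) f dx < ∞. -/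
/-! The system has traceless coefficient matrix, so by Liouville's formula the Wronskian
`W = a₁ b₂ - a₂ b₁` of two solutions is a nonzero constant `c` on `(0,ε)`. Pointwise
`2 |c| ≤ (a₁² + b₁²) + (a₂² + b₂²)`, so multiplying by `f` and integrating, `2 |c| ∫ f = ∞`
is bounded by the sum of the two weighted `L²` norms. -/

open MeasureTheory Set
open scoped ENNReal

section Wronskian

variable {𝕜 : Type*}

def wronskian [Ring 𝕜] (a₁ b₁ a₂ b₂ : 𝕜 → 𝕜) (x : 𝕜) : 𝕜 :=
  a₁ x * b₂ x - a₂ x * b₁ x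

theorem hasDerivAt_wronskian [NontriviallyNormedField 𝕜] {a₁ b₁ a₂ b₂ : 𝕜 → 𝕜} {p q r s x : 𝕜}
    (ha₁ : HasDerivAt a₁ (p * a₁ x + q * b₁ x) x) (hb₁ : HasDerivAt b₁ (r * a₁ x + s * b₁ x) x)
    (ha₂ : HasDerivAt a₂ (p * a₂ x + q * b₂ x) x) (hb₂ : HasDerivAt b₂ (r * a₂ x + s * b₂ x) x) :
    HasDerivAt (wronskian a₁ b₁ a₂ b₂) ((p + s) * wronskian a₁ b₁ a₂ b₂ x) x :=
  ((ha₁.mul hb₂).sub (ha₂.mul hb₁)).congr_deriv (by unfold wronskian; ring)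

theorem wronskian_eq_of_traceless [RCLike 𝕜] {a₁ b₁ a₂ b₂ p q r s : 𝕜 → 𝕜} {U : Set 𝕜}
    (hU : IsOpen U) (hU' : IsPreconnected U) (htr : ∀ x ∈ U, p x + s x = 0)
    (ha₁ : ∀ x ∈ U, HasDerivAt a₁ (p x * a₁ x + q x * b₁ x) x)
    (hb₁ : ∀ x ∈ U, HasDerivAt b₁ (r x * a₁ x + s x * b₁ x) x)
    (ha₂ : ∀ x ∈ U, HasDerivAt a₂ (p x * a₂ x + q x * b₂ x) x)
    (hb₂ : ∀ x ∈ U, HasDerivAt b₂ (r x * a₂ x + s x * b₂ x) x)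
    {x y : 𝕜} (hx : x ∈ U) (hy : y ∈ U) :
    wronskian a₁ b₁ a₂ b₂ x = wronskian a₁ b₁ a₂ b₂ y := by
  have hW : ∀ z ∈ U, HasDerivAt (wronskian a₁ b₁ a₂ b₂) 0 z := fun z hz => by
    simpa [htr z hz] using
      hasDerivAt_wronskian (ha₁ z hz) (hb₁ z hz) (ha₂ z hz) (hb₂ z hz)
  exact hU.is_const_of_deriv_eq_zero hU'
    (fun z hz => (hW z hz).differentiableAt.differentiableWithinAt)
    (fun z hz => (hW z hz).deriv) hx hy

end Wronskian

theorem two_mul_abs_mul_sub_mul_le (a₁ b₁ a₂ b₂ : ℝ) :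
    2 * |a₁ * b₂ - a₂ * b₁| ≤ (a₁ ^ 2 + b₁ ^ 2) + (a₂ ^ 2 + b₂ ^ 2) := by
  rw [← abs_two, ← abs_mul, abs_le]
  constructor
  · nlinarith [sq_nonneg (a₁ + b₂), sq_nonneg (a₂ - b₁)]
  · nlinarith [sq_nonneg (a₁ - b₂), sq_nonneg (a₂ + b₁)]

theorem lintegral_add_eq_top_of_const_mul_le {α : Type*} [MeasurableSpace α] {μ : Measure α}
    {g h₁ h₂ : α → ℝ≥0∞} {c : ℝ≥0∞} (hc : c ≠ 0) (hg : ∫⁻ x, g x ∂μ = ∞)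
    (hh₁ : AEMeasurable h₁ μ) (hle : ∀ᵐ x ∂μ, c * g x ≤ h₁ x + h₂ x) :
    ∫⁻ x, h₁ x ∂μ + ∫⁻ x, h₂ x ∂μ = ∞ :=
  top_unique <| calc
    ∞ = c * ∫⁻ x, g x ∂μ := by rw [hg, ENNReal.mul_top hc]
    _ ≤ ∫⁻ x, c * g x ∂μ := lintegral_const_mul_le c g
    _ ≤ ∫⁻ x, h₁ x + h₂ x ∂μ := lintegral_mono_ae hle
    _ = ∫⁻ x, h₁ x ∂μ + ∫⁻ x, h₂ x ∂μ := lintegral_add_left' hh₁ h₂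

theorem fundamental_solutions_not_both_L2_general
    (lam l ε : ℝ)
    (f : ℝ → ℝ) (hf_cont : ContinuousOn f (Set.Ioo 0 ε))
    (hf_pos : ∀ x ∈ Set.Ioo 0 ε, 0 < f x)
    (hf_div : ∫⁻ x in Set.Ioo 0 ε, ENNReal.ofReal (f x) = ⊤)
    (a₁ b₁ a₂ b₂ : ℝ → ℝ)
    (ha₁ : ∀ x ∈ Set.Ioo 0 ε, HasDerivAt a₁ (-lam * a₁ x + l * f x * b₁ x) x)
    (hb₁ : ∀ x ∈ Set.Ioo 0 ε, HasDerivAt b₁ (-(l * f x) * a₁ x + lam * b₁ x) x)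
    (ha₂ : ∀ x ∈ Set.Ioo 0 ε, HasDerivAt a₂ (-lam * a₂ x + l * f x * b₂ x) x)
    (hb₂ : ∀ x ∈ Set.Ioo 0 ε, HasDerivAt b₂ (-(l * f x) * a₂ x + lam * b₂ x) x)
    (hW : ∃ x ∈ Set.Ioo 0 ε, a₁ x * b₂ x - a₂ x * b₁ x ≠ 0) :
    ¬((∫⁻ x in Set.Ioo 0 ε, ENNReal.ofReal ((a₁ x ^ 2 + b₁ x ^ 2) * f x) < ⊤) ∧
      (∫⁻ x in Set.Ioo 0 ε, ENNReal.ofReal ((a₂ x ^ 2 + b₂ x ^ 2) * f x) < ⊤)) := by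
  rintro ⟨h₁, h₂⟩
  obtain ⟨x₀, hx₀, hW₀⟩ : ∃ x ∈ Ioo 0 ε, wronskian a₁ b₁ a₂ b₂ x ≠ 0 := hW
  have hconst : ∀ x ∈ Ioo 0 ε, wronskian a₁ b₁ a₂ b₂ x = wronskian a₁ b₁ a₂ b₂ x₀ :=
    fun x hx => wronskian_eq_of_traceless (p := fun _ => -lam) (q := fun x => l * f x)
      (r := fun x => -(l * f x)) (s := fun _ => lam) isOpen_Ioo isPreconnected_Ioo
      (fun _ _ => neg_add_cancel lam) ha₁ hb₁ ha₂ hb₂ hx hx₀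
  have hle : ∀ x ∈ Ioo 0 ε, ENNReal.ofReal (2 * |wronskian a₁ b₁ a₂ b₂ x₀|) * ENNReal.ofReal (f x)
      ≤ ENNReal.ofReal ((a₁ x ^ 2 + b₁ x ^ 2) * f x)
        + ENNReal.ofReal ((a₂ x ^ 2 + b₂ x ^ 2) * f x) := fun x hx => by
    have hfx := (hf_pos x hx).le
    rw [← ENNReal.ofReal_mul (by positivity), ← ENNReal.ofReal_add (by positivity) (by positivity),
      ← add_mul, ← hconst x hx]
    exact ENNReal.ofReal_le_ofReal
      (mul_le_mul_of_nonneg_right (two_mul_abs_mul_sub_mul_le _ _ _ _) hfx)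
  have hmeas : AEMeasurable (fun x => ENNReal.ofReal ((a₁ x ^ 2 + b₁ x ^ 2) * f x))
      (volume.restrict (Ioo 0 ε)) := by
    have ha₁c : ContinuousOn a₁ (Ioo 0 ε) := fun x hx => (ha₁ x hx).continuousAt.continuousWithinAt
    have hb₁c : ContinuousOn b₁ (Ioo 0 ε) := fun x hx => (hb₁ x hx).continuousAt.continuousWithinAt
    exact ENNReal.measurable_ofReal.comp_aemeasurable
      ((((ha₁c.pow 2).add (hb₁c.pow 2)).mul hf_cont).aemeasurable measurableSet_Ioo)
  have hsum := lintegral_add_eq_top_of_const_mul_le (by simpa using hW₀) hf_div hmeas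
    ((ae_restrict_iff' measurableSet_Ioo).2 (ae_of_all _ hle))
  exact ENNReal.add_ne_top.2 ⟨h₁.ne, h₂.ne⟩ hsum

/-- Two solutions of the system `u' = -λu + l f v`, `v' = -l f u + λ v` on `(0,ε)`
with nonvanishing Wronskian cannot both be square-integrable with respect to `f dx`,
when `f : (0,ε) → (0,∞)` is continuous with `∫₀^ε f = ∞`. -/
theorem fundamental_solutions_not_both_L2
    (lam l ε : ℝ) (hε : 0 < ε)
    (f : ℝ → ℝ) (hf_cont : ContinuousOn f (Set.Ioo 0 ε))
    (hf_pos : ∀ x ∈ Set.Ioo 0 ε, 0 < f x)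
    (hf_div : ∫⁻ x in Set.Ioo 0 ε, ENNReal.ofReal (f x) = ⊤)
    (a₁ b₁ a₂ b₂ : ℝ → ℝ)
    (ha₁ : ∀ x ∈ Set.Ioo 0 ε, HasDerivAt a₁ (-lam * a₁ x + l * f x * b₁ x) x)
    (hb₁ : ∀ x ∈ Set.Ioo 0 ε, HasDerivAt b₁ (-(l * f x) * a₁ x + lam * b₁ x) x)
    (ha₂ : ∀ x ∈ Set.Ioo 0 ε, HasDerivAt a₂ (-lam * a₂ x + l * f x * b₂ x) x)
    (hb₂ : ∀ x ∈ Set.Ioo 0 ε, HasDerivAt b₂ (-(l * f x) * a₂ x + lam * b₂ x) x)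
    (hW : ∃ x ∈ Set.Ioo 0 ε, a₁ x * b₂ x - a₂ x * b₁ x ≠ 0) :
    ¬((∫⁻ x in Set.Ioo 0 ε, ENNReal.ofReal ((a₁ x ^ 2 + b₁ x ^ 2) * f x) < ⊤) ∧
      (∫⁻ x in Set.Ioo 0 ε, ENNReal.ofReal ((a₂ x ^ 2 + b₂ x ^ 2) * f x) < ⊤)) :=
  fundamental_solutions_not_both_L2_general lam l ε f hf_cont hf_pos hf_div a₁ b₁ a₂ b₂ ha₁ hb₁ ha₂
    hb₂ hW
end

section
/- Let H be a complex Hilbert space, A : H → H a bounded self-adjoint operator, and c : H → H a bounded operator with c* = -c and c ∘ c = -I such that A ∘ c = -c ∘ A. Let |A| := √(A²) (continuous functional calculus). Let l ∈ ℝ, ε > 0, f : (0,ε) → ℝ continuous, and let φ : (0,ε) → H be differentiable with φ'(x) + A(φ(x)) = -l·f(x)·c(φ(x)) for all x ∈ (0,ε). Then the function F(x) := ‖exp(-x|A|)(φ(x))‖² is non-increasing on (0,ε). -/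
/-!
Put `B := |A|` and `ψ(x) := exp(-xB) φ(x)`. The operator `B` commutes with `A`, being a function
of `A`, and with `c`, being a function of `A²`, which commutes with `c` because `c` anticommutes
with `A`. Hence `ψ' = -(B + A) ψ - l f c ψ`. Since `B + A = 2A⁺ ≥ 0` and `c` is skew-adjoint,
`(‖ψ‖²)' = -2 Re⟪ψ, (B + A) ψ⟫ ≤ 0`.
-/

open scoped InnerProductSpace

namespace CFC

variable {A : Type*} [CStarAlgebra A] [PartialOrder A] [StarOrderedRing A]

lemma sqrt_sq_eq_abs {a : A} (ha : IsSelfAdjoint a) : sqrt (a ^ 2) = abs a := by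
  rw [abs, ha.star_eq, sq]

lemma abs_add_self_nonneg {a : A} (ha : IsSelfAdjoint a) : 0 ≤ abs a + a := by
  rw [abs_add_self a ha]
  exact nsmul_nonneg (posPart_nonneg a) 2

lemma commute_abs_of_mul_eq_neg_mul {a b : A} (ha : IsSelfAdjoint a) (hab : a * b = -(b * a)) :
    Commute b (abs a) := by
  have hsq : Commute (star a * a) b := by
    rw [ha.star_eq]
    change a * a * b = b * (a * a)
    rw [mul_assoc, hab, mul_neg, ← mul_assoc, hab, neg_mul, neg_neg, mul_assoc]
  exact (hsq.cfcₙ_nnreal NNReal.sqrt).symm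

end CFC

lemma ContinuousLinearMap.re_inner_apply_eq_zero_of_adjoint_eq_neg {𝕜 E : Type*} [RCLike 𝕜]
    [NormedAddCommGroup E] [InnerProductSpace 𝕜 E] [CompleteSpace E] {c : E →L[𝕜] E}
    (hc : adjoint c = -c) (v : E) : RCLike.re ⟪v, c v⟫_𝕜 = 0 := by
  have h : ⟪v, c v⟫_𝕜 = -starRingEnd 𝕜 ⟪v, c v⟫_𝕜 :=
    calc ⟪v, c v⟫_𝕜 = ⟪adjoint c v, v⟫_𝕜 := (adjoint_inner_left c v v).symm
      _ = -starRingEnd 𝕜 ⟪v, c v⟫_𝕜 := by rw [hc, neg_apply, inner_neg_left, inner_conj_symm]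
  have hre := congrArg RCLike.re h
  rw [map_neg, RCLike.conj_re] at hre
  linarith

section Evolution

variable {E : Type*} [NormedAddCommGroup E] [NormedSpace ℂ E] [CompleteSpace E]

lemma hasDerivAt_exp_neg_smul_apply {B : E →L[ℂ] E} {φ : ℝ → E} {φ' : E} {x : ℝ}
    (hφ : HasDerivAt φ φ' x) :
    HasDerivAt (fun y : ℝ => NormedSpace.exp ((-y) • B) (φ y))
      (NormedSpace.exp ((-x) • B) (φ' - B (φ x))) x := by
  have hexp : HasDerivAt (fun y : ℝ => NormedSpace.exp ((-y) • B))
      (-(NormedSpace.exp ((-x) • B) * B)) x := by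
    simpa [Function.comp_def] using
      (hasDerivAt_exp_smul_const (𝕂 := ℝ) B (-x)).scomp x (hasDerivAt_neg x)
  -- `clm_apply` is the product rule for `ℝ`-linear operators, so restrict scalars first.
  have hprod := ((ContinuousLinearMap.restrictScalarsL ℂ E E ℝ ℝ).hasFDerivAt.comp_hasDerivAt x
    hexp).clm_apply hφ
  refine hprod.congr_deriv ?_
  change -(NormedSpace.exp ((-x) • B) * B) (φ x) + NormedSpace.exp ((-x) • B) φ' = _
  simp only [neg_smul, mul_apply_eq_comp, sub_eq_neg_add, map_add, map_neg]

lemma hasDerivAt_exp_neg_smul_apply_of_commute {A B c : E →L[ℂ] E} (hAB : Commute A B)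
    (hcB : Commute c B) {φ : ℝ → E} {μ : ℂ} {x : ℝ}
    (hφ : HasDerivAt φ (-(A (φ x)) - μ • c (φ x)) x) :
    HasDerivAt (fun y : ℝ => NormedSpace.exp ((-y) • B) (φ y))
      (-((B + A) (NormedSpace.exp ((-x) • B) (φ x))) - μ • c (NormedSpace.exp ((-x) • B) (φ x)))
      x := by
  refine (hasDerivAt_exp_neg_smul_apply hφ).congr_deriv ?_
  set U := NormedSpace.exp ((-x) • B)
  have hUP (v : E) : U ((B + A) v) = (B + A) (U v) :=
    DFunLike.congr_fun ((((Commute.refl B).add_left hAB).smul_right (-x)).exp_right.eq.symm) v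
  have hUc (v : E) : U (c v) = c (U v) :=
    DFunLike.congr_fun (((hcB.smul_right (-x)).exp_right).eq.symm) v
  rw [← hUP, ← hUc, add_apply]
  simp only [map_sub, map_neg, map_smul, map_add]
  abel

end Evolution

lemma HasDerivAt.norm_sq_of_eq_neg_apply_sub_smul {H : Type*} [NormedAddCommGroup H]
    [InnerProductSpace ℂ H] [CompleteSpace H] {P c : H →L[ℂ] H}
    (hc : ContinuousLinearMap.adjoint c = -c) {ψ : ℝ → H} {μ : ℝ} {x : ℝ}
    (hψ : HasDerivAt ψ (-(P (ψ x)) - (μ : ℂ) • c (ψ x)) x) :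
    HasDerivAt (‖ψ ·‖ ^ 2) (-2 * RCLike.re ⟪ψ x, P (ψ x)⟫_ℂ) x := by
  let _ := InnerProductSpace.complexToReal (G := H)
  refine hψ.norm_sq.congr_deriv ?_
  have hskew := ContinuousLinearMap.re_inner_apply_eq_zero_of_adjoint_eq_neg hc (ψ x)
  rw [real_inner_eq_re_inner ℂ, inner_sub_right, inner_neg_right, inner_smul_right]
  simp only [RCLike.re_to_complex, Complex.sub_re, Complex.neg_re, Complex.re_ofReal_mul]
    at hskew ⊢
  rw [hskew]
  ring

theorem exp_abs_norm_sq_antitone_general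
    {H : Type*} [NormedAddCommGroup H] [InnerProductSpace ℂ H] [CompleteSpace H]
    (A c : H →L[ℂ] H) (hA : IsSelfAdjoint A)
    (hc_skew : ContinuousLinearMap.adjoint c = -c)
    (hAc : A ∘L c = -(c ∘L A))
    (l : ℝ) (ε : ℝ)
    (f : ℝ → ℝ)
    (φ : ℝ → H)
    (hφ_ode : ∀ x ∈ Set.Ioo 0 ε,
      HasDerivAt φ (-(A (φ x)) - ((l * f x : ℝ) : ℂ) • c (φ x)) x) :
    AntitoneOn
      (fun x : ℝ => ‖NormedSpace.exp (((-x : ℝ) : ℂ) • CFC.sqrt (A ^ 2)) (φ x)‖ ^ 2)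
      (Set.Ioo 0 ε) := by
  simp only [Complex.coe_smul, CFC.sqrt_sq_eq_abs hA]
  have hAB : Commute A (CFC.abs A) := (CFC.commute_abs_self A hA.isStarNormal).symm
  have hcB : Commute c (CFC.abs A) := CFC.commute_abs_of_mul_eq_neg_mul hA hAc
  have hP : (CFC.abs A + A).IsPositive :=
    (ContinuousLinearMap.nonneg_iff_isPositive _).mp (CFC.abs_add_self_nonneg hA)
  have hderiv (x : ℝ) (hx : x ∈ Set.Ioo 0 ε) := (hasDerivAt_exp_neg_smul_apply_of_commute hAB hcB
    (hφ_ode x hx)).norm_sq_of_eq_neg_apply_sub_smul hc_skew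
  refine antitoneOn_of_deriv_nonpos (convex_Ioo 0 ε)
    (fun x hx => (hderiv x hx).continuousAt.continuousWithinAt) (fun x hx => ?_) (fun x hx => ?_)
    <;> rw [interior_Ioo] at hx
  · exact (hderiv x hx).differentiableAt.differentiableWithinAt
  · rw [(hderiv x hx).deriv]
    exact mul_nonpos_of_nonpos_of_nonneg (by norm_num) (hP.re_inner_nonneg_right _)

/-- With `A` bounded self-adjoint, `c` a skew-adjoint involution anti-commuting with `A`,
`l` real, `f` continuous on `(0,ε)`, and `φ` solving `φ' + Aφ = -l f c φ` on `(0,ε)`,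
the function `F(x) := ‖exp(-x|A|)(φ(x))‖²` is non-increasing on `(0,ε)`,
where `|A| := √(A²)` via the continuous functional calculus. -/
theorem exp_abs_norm_sq_antitone
    {H : Type*} [NormedAddCommGroup H] [InnerProductSpace ℂ H] [CompleteSpace H]
    (A c : H →L[ℂ] H) (hA : IsSelfAdjoint A)
    (hc_skew : ContinuousLinearMap.adjoint c = -c)
    (hc_sq : c ∘L c = -ContinuousLinearMap.id ℂ H)
    (hAc : A ∘L c = -(c ∘L A))
    (l : ℝ) (ε : ℝ) (hε : 0 < ε)
    (f : ℝ → ℝ) (hf_cont : ContinuousOn f (Set.Ioo 0 ε))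
    (φ : ℝ → H)
    (hφ_ode : ∀ x ∈ Set.Ioo 0 ε,
      HasDerivAt φ (-(A (φ x)) - ((l * f x : ℝ) : ℂ) • c (φ x)) x) :
    AntitoneOn
      (fun x : ℝ => ‖NormedSpace.exp (((-x : ℝ) : ℂ) • CFC.sqrt (A ^ 2)) (φ x)‖ ^ 2)
      (Set.Ioo 0 ε) :=
  exp_abs_norm_sq_antitone_general A c hA hc_skew hAc l ε f φ hφ_ode
end

section
/- Let H be a complex Hilbert space, A : H → H a bounded self-adjoint operator, and c : H → H a bounded operator with c* = -c and c ∘ c = -I such that A ∘ c = -c ∘ A. Let l ∈ ℝ, 0 < ε < ∞, and f : (0,ε) → (0,∞) continuous. If φ : (0,ε) → H is continuously differentiable, satisfies φ'(x) + A(φ(x)) = -l·f(x)·c(φ(x)) for all x ∈ (0,ε), and ∫₀^ε ‖φ(x)‖² f(x) dx < ∞, then the function x ↦ (d/dx)‖exp(xA)(φ(x))‖² is Lebesgue-integrable on (0,ε); consequently the limit lim_{x→0⁺} ‖exp(xA)(φ(x))‖² exists and is finite. -/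
/-!
Put `ψ x = exp (x A) (φ x)`. Since `exp (x A)` commutes with `A`, the equation turns into
`ψ' = -l f exp (x A) (c φ)`, and as `exp (x A)` is bounded for `x ∈ [0, ε]` this gives
`|(‖ψ‖²)'| = 2 |⟪ψ, ψ'⟫| ≤ C ‖φ‖² f`, which is integrable by assumption. A function whose
derivative is integrable on `(0, ε)` has a limit at `0⁺` by the fundamental theorem of calculus.
-/

open MeasureTheory Set Filter Topology NormedSpace

theorem exists_tendsto_nhdsGT_of_hasDerivAt_of_integrableOn
    {E : Type*} [NormedAddCommGroup E] [NormedSpace ℝ E] [CompleteSpace E]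
    {g g' : ℝ → E} {a b : ℝ} (hab : a < b)
    (hg : ∀ x ∈ Ioo a b, HasDerivAt g (g' x) x) (hg' : IntegrableOn g' (Ioo a b)) :
    ∃ L, Tendsto g (𝓝[>] a) (𝓝 L) := by
  obtain ⟨m, ham, hmb⟩ := exists_between hab
  have hint : IntegrableOn g' (uIcc a m) := by
    rw [uIcc_of_le ham.le, integrableOn_Icc_iff_integrableOn_Ioo]
    exact hg'.mono_set (Ioo_subset_Ioo_right hmb.le)
  have hftc : ∀ x ∈ Ioo a m, g x = g m - ∫ t in x..m, g' t := fun x hx => by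
    have hsub : uIcc x m ⊆ Icc x m := by rw [uIcc_of_le hx.2.le]
    have hxm : Icc x m ⊆ Ioo a b := Icc_subset_Ioo hx.1 hmb
    rw [intervalIntegral.integral_eq_sub_of_hasDerivAt (fun t ht => hg t (hxm (hsub ht)))
      (hint.mono_set (hsub.trans ?_)).intervalIntegrable, sub_sub_cancel]
    rw [uIcc_of_le ham.le]
    exact Icc_subset_Icc_left hx.1.le
  have hprim : Tendsto (fun x => ∫ t in x..m, g' t) (𝓝[>] a) (𝓝 (∫ t in a..m, g' t)) := by
    have hcont := intervalIntegral.continuousOn_primitive_interval_left hint a left_mem_uIcc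
    rw [uIcc_of_le ham.le] at hcont
    refine hcont.mono_left ?_
    rw [← nhdsWithin_Ioo_eq_nhdsGT ham]
    exact nhdsWithin_mono _ Ioo_subset_Icc_self
  exact ⟨_, (tendsto_const_nhds.sub hprim).congr'
    (eventually_of_mem (Ioo_mem_nhdsGT ham) fun x hx => (hftc x hx).symm)⟩

theorem norm_deriv_norm_sq_le {F : Type*} [NormedAddCommGroup F] [InnerProductSpace ℝ F]
    {ψ : ℝ → F} {ψ' : F} {x : ℝ} (h : HasDerivAt ψ ψ' x) :
    ‖deriv (fun t => ‖ψ t‖ ^ 2) x‖ ≤ 2 * ‖ψ x‖ * ‖ψ'‖ := by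
  rw [h.norm_sq.deriv, norm_mul, Real.norm_two, mul_assoc]
  exact mul_le_mul_of_nonneg_left (norm_inner_le_norm _ _) zero_le_two

theorem norm_deriv_norm_sq_apply_le {H : Type*} [NormedAddCommGroup H] [InnerProductSpace ℂ H]
    {E : ℝ → H →L[ℂ] H} {v : ℝ → H} {w : H} {x M : ℝ}
    (h : HasDerivAt (fun t => E t (v t)) (E x w) x) (hE : ‖E x‖ ≤ M) :
    ‖deriv (fun t => ‖E t (v t)‖ ^ 2) x‖ ≤ 2 * M ^ 2 * ‖v x‖ * ‖w‖ := by
  let _ : InnerProductSpace ℝ H := InnerProductSpace.complexToReal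
  have hM : 0 ≤ M := (norm_nonneg _).trans hE
  calc _ ≤ 2 * ‖E x (v x)‖ * ‖E x w‖ := norm_deriv_norm_sq_le h
    _ ≤ 2 * (M * ‖v x‖) * (M * ‖w‖) := by gcongr <;> exact (E x).le_of_opNorm_le hE _
    _ = 2 * M ^ 2 * ‖v x‖ * ‖w‖ := by ring

section ExpSmul

variable {H : Type*} [NormedAddCommGroup H] [NormedSpace ℂ H] [CompleteSpace H]

theorem hasDerivAt_exp_ofReal_smul_apply (A : H →L[ℂ] H) {v : ℝ → H} {v' : H} {x : ℝ}
    (hv : HasDerivAt v v' x) :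
    HasDerivAt (fun t : ℝ => exp ((t : ℂ) • A) (v t)) (exp ((x : ℂ) • A) (A (v x) + v')) x := by
  have hexp := (ContinuousLinearMap.restrictScalarsL ℂ H H ℝ ℝ).hasFDerivAt.comp_hasDerivAt x
    (hasDerivAt_exp_smul_const (𝕂 := ℝ) A x)
  simpa [Complex.coe_smul] using hexp.clm_apply hv

theorem exists_norm_exp_ofReal_smul_le (A : H →L[ℂ] H) (a b : ℝ) :
    ∃ M, ∀ x ∈ Icc a b, ‖exp ((x : ℂ) • A)‖ ≤ M :=
  isCompact_Icc.exists_bound_of_continuousOn <| by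
    simpa only [Complex.coe_smul] using (differentiable_exp_smul_const ℝ A).continuous.continuousOn

end ExpSmul

theorem deriv_norm_sq_integrable_and_limit_exists_general
    {H : Type*} [NormedAddCommGroup H] [InnerProductSpace ℂ H] [CompleteSpace H]
    (A c : H →L[ℂ] H)
    (l : ℝ) (ε : ℝ) (hε : 0 < ε)
    (f : ℝ → ℝ)
    (hf_pos : ∀ x ∈ Set.Ioo 0 ε, 0 < f x)
    (φ : ℝ → H)
    (hφ_ode : ∀ x ∈ Set.Ioo 0 ε,
      HasDerivAt φ (-(A (φ x)) - ((l * f x : ℝ) : ℂ) • c (φ x)) x)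
    (hφ_L2 : ∫⁻ x in Set.Ioo 0 ε, ENNReal.ofReal (‖φ x‖ ^ 2 * f x) < ⊤) :
    MeasureTheory.IntegrableOn
      (deriv fun x : ℝ => ‖NormedSpace.exp ((x : ℂ) • A) (φ x)‖ ^ 2)
      (Set.Ioo 0 ε) MeasureTheory.volume ∧
    ∃ L : ℝ, Filter.Tendsto (fun x : ℝ => ‖NormedSpace.exp ((x : ℂ) • A) (φ x)‖ ^ 2)
      (nhdsWithin 0 (Set.Ioi 0)) (nhds L) := by
  set E : ℝ → H →L[ℂ] H := fun x => exp ((x : ℂ) • A)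
  set g : ℝ → ℝ := fun x => ‖E x (φ x)‖ ^ 2
  have hψ : ∀ x ∈ Ioo 0 ε, HasDerivAt (fun t => E t (φ t))
      (E x (-(((l * f x : ℝ) : ℂ) • c (φ x)))) x := fun x hx => by
    convert hasDerivAt_exp_ofReal_smul_apply A (hφ_ode x hx) using 2
    abel
  have hg : ∀ x ∈ Ioo 0 ε, HasDerivAt g (deriv g x) x := fun x hx =>
    ((hψ x hx).differentiableAt.norm_sq ℂ).hasDerivAt
  obtain ⟨M, hM⟩ := exists_norm_exp_ofReal_smul_le A 0 ε
  have hbound : ∀ x ∈ Ioo 0 ε, ‖deriv g x‖ ≤ 2 * M ^ 2 * |l| * ‖c‖ * (‖φ x‖ ^ 2 * f x) := by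
    intro x hx
    have hcφ : ‖-(((l * f x : ℝ) : ℂ) • c (φ x))‖ ≤ |l| * f x * (‖c‖ * ‖φ x‖) := by
      rw [norm_neg, norm_smul, Complex.norm_real, Real.norm_eq_abs, abs_mul,
        abs_of_pos (hf_pos x hx)]
      exact mul_le_mul_of_nonneg_left (c.le_opNorm _)
        (mul_nonneg (abs_nonneg l) (hf_pos x hx).le)
    calc ‖deriv g x‖ ≤ 2 * M ^ 2 * ‖φ x‖ * ‖-(((l * f x : ℝ) : ℂ) • c (φ x))‖ :=
          norm_deriv_norm_sq_apply_le (hψ x hx) (hM x (Ioo_subset_Icc_self hx))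
      _ ≤ 2 * M ^ 2 * ‖φ x‖ * (|l| * f x * (‖c‖ * ‖φ x‖)) := by gcongr
      _ = 2 * M ^ 2 * |l| * ‖c‖ * (‖φ x‖ ^ 2 * f x) := by ring
  have hL1 : HasFiniteIntegral (fun x => ‖φ x‖ ^ 2 * f x) (volume.restrict (Ioo 0 ε)) :=
    (hasFiniteIntegral_iff_ofReal (ae_restrict_of_forall_mem measurableSet_Ioo fun x hx =>
      mul_nonneg (sq_nonneg _) (hf_pos x hx).le)).2 hφ_L2
  have hint : IntegrableOn (deriv g) (Ioo 0 ε) :=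
    ⟨(measurable_deriv g).aestronglyMeasurable,
      (hL1.const_mul _).mono' (ae_restrict_of_forall_mem measurableSet_Ioo hbound)⟩
  exact ⟨hint, exists_tendsto_nhdsGT_of_hasDerivAt_of_integrableOn hε hg hint⟩

/-- With `A` bounded self-adjoint, `c` a skew-adjoint involution anti-commuting with `A`,
`l` real, `0 < ε < ∞`, `f : (0,ε) → (0,∞)` continuous, and `φ` a continuously
differentiable solution of `φ' + Aφ = -l f c φ` which is square-integrable with respect
to `f dx`, the derivative of `x ↦ ‖exp(xA)(φ(x))‖²` is Lebesgue-integrable on `(0,ε)`;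
consequently `lim_{x→0⁺} ‖exp(xA)(φ(x))‖²` exists and is finite. -/
theorem deriv_norm_sq_integrable_and_limit_exists
    {H : Type*} [NormedAddCommGroup H] [InnerProductSpace ℂ H] [CompleteSpace H]
    (A c : H →L[ℂ] H) (hA : IsSelfAdjoint A)
    (hc_skew : ContinuousLinearMap.adjoint c = -c)
    (hc_sq : c ∘L c = -ContinuousLinearMap.id ℂ H)
    (hAc : A ∘L c = -(c ∘L A))
    (l : ℝ) (ε : ℝ) (hε : 0 < ε)
    (f : ℝ → ℝ) (hf_cont : ContinuousOn f (Set.Ioo 0 ε))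
    (hf_pos : ∀ x ∈ Set.Ioo 0 ε, 0 < f x)
    (φ : ℝ → H)
    (hφ_ode : ∀ x ∈ Set.Ioo 0 ε,
      HasDerivAt φ (-(A (φ x)) - ((l * f x : ℝ) : ℂ) • c (φ x)) x)
    (hφ_deriv_cont : ContinuousOn (deriv φ) (Set.Ioo 0 ε))
    (hφ_L2 : ∫⁻ x in Set.Ioo 0 ε, ENNReal.ofReal (‖φ x‖ ^ 2 * f x) < ⊤) :
    MeasureTheory.IntegrableOn
      (deriv fun x : ℝ => ‖NormedSpace.exp ((x : ℂ) • A) (φ x)‖ ^ 2)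
      (Set.Ioo 0 ε) MeasureTheory.volume ∧
    ∃ L : ℝ, Filter.Tendsto (fun x : ℝ => ‖NormedSpace.exp ((x : ℂ) • A) (φ x)‖ ^ 2)
      (nhdsWithin 0 (Set.Ioi 0)) (nhds L) :=
  deriv_norm_sq_integrable_and_limit_exists_general A c l ε hε f hf_pos φ hφ_ode hφ_L2
end
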